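/- arXiv:math/0209398 — 7 statements merged into one kernel-verified Lean document; each statement's English description precedes it below -/
import Mathlib

section
/- Let l ≥ 2 and let (b_1,…,b_l), (c_1,…,c_l) be strictly increasing sequences of positive integers. Then ∑_{d ≥ b, d ∈ S_l} [c; d] (1-t)^{∑(d_i - b_i)} = ∑_{d ≤ c, d ∈ S_l} [d; b] (1-t)^{∑(c_i - d_i)}, where both sums are over strictly increasing sequences d = (d_1,…,d_l), and moreover both sides equal ∏_{i=2}^{l} (1-t)^{max(0, c_{i-1} - b_i + 1)} when b ≤ c componentwise. -/
open Polynomial Finset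

/-- Bracket symbol: `t` if `c > b`, `1` if `c = b`, `0` if `c < b` (here `t = X ∈ ℚ[t]`). -/
noncomputable def brk (c b : ℕ) : Polynomial ℚ :=
  if b < c then X else if c = b then 1 else 0

/-- Tuple bracket: `0` if `c i ≥ b (i+1)` for some `i < l`, and `∏ᵢ [cᵢ, bᵢ]` otherwise. -/
noncomputable def brkT {l : ℕ} (c b : Fin l → ℕ) : Polynomial ℚ :=
  if ∀ i : Fin l, ∀ h : (i : ℕ) + 1 < l, c i < b ⟨(i : ℕ) + 1, h⟩ then
    ∏ i, brk (c i) (b i)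
  else 0

/-!
Every summand factors over the coordinates once the interlacing condition of `[c; d]`
(resp. `[d; b]`) holds, and on the range of summation that condition together with
`d ≤ c` (resp. `b ≤ d`, outside which `[d; b]` vanishes) cuts out a box of tuples, all
automatically strictly increasing.
Hence each sum is a product of one-variable sums, which telescope since `t + (1 - t) = 1`:
`∑_{x=a}^{c} [c, x] (1-t)^{x-b} = (1-t)^{a-b}`. For `b ≤ c` both sides become
`∏ (1-t)^{c_{i-1}+1-b_i}`; otherwise the left sum is empty and every term on the right
has some `dᵢ ≤ cᵢ < bᵢ`, so both sides vanish.
-/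

lemma brk_self (n : ℕ) : brk n n = 1 := by
  simp [brk]

lemma brk_eq_X {b c : ℕ} (h : b < c) : brk c b = X :=
  if_pos h

lemma brk_eq_zero {b c : ℕ} (h : c < b) : brk c b = 0 := by
  rw [brk, if_neg (by omega), if_neg (by omega)]

lemma sum_Icc_brk_mul_pow_sub_left {a b c : ℕ} (hba : b ≤ a) (hac : a ≤ c) :
    ∑ x ∈ Icc a c, brk c x * (1 - X) ^ (x - b) = (1 - X : ℚ[X]) ^ (a - b) := by
  induction hac using Nat.decreasingInduction with
  | self => rw [Icc_self, sum_singleton, brk_self, one_mul]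
  | of_succ k hkc ih =>
    rw [Icc_eq_cons_Ioc hkc.le, sum_cons, ← Icc_add_one_left_eq_Ioc, ih (by omega),
      brk_eq_X hkc, show k + 1 - b = k - b + 1 by omega, pow_succ]
    ring

lemma sum_Icc_brk_mul_pow_sub_right {b c u : ℕ} (hbu : b ≤ u) (huc : u ≤ c) :
    ∑ x ∈ Icc b u, brk x b * (1 - X) ^ (c - x) = (1 - X : ℚ[X]) ^ (c - u) := by
  induction u, hbu using Nat.le_induction with
  | base => rw [Icc_self, sum_singleton, brk_self, one_mul]
  | succ u hbu ih =>
    rw [sum_Icc_succ_top (by omega), ih (by omega), brk_eq_X (by omega),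
      show c - u = c - (u + 1) + 1 by omega, pow_succ]
    ring

section Tuples

variable {n : ℕ}

lemma brkT_eq_ite (c b : Fin (n + 1) → ℕ) :
    brkT c b = if ∀ j : Fin n, c j.castSucc < b j.succ then ∏ i, brk (c i) (b i) else 0 := by
  refine if_congr ⟨fun h j => h j.castSucc (by simp), fun h i hi => ?_⟩ rfl rfl
  exact h ⟨i, by omega⟩

lemma brkT_eq_zero_of_lt {l : ℕ} {c b : Fin l → ℕ} {i : Fin l} (h : c i < b i) :
    brkT c b = 0 := by
  rw [brkT]
  split_ifs
  · exact prod_eq_zero (mem_univ i) (brk_eq_zero h)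
  · rfl

variable (b c : Fin (n + 1) → ℕ)

/-- The smallest `d ≥ b` with `c j < d (j + 1)` for all `j`. -/
def lowerCorner : Fin (n + 1) → ℕ :=
  Fin.cons (b 0) fun j => max (b j.succ) (c j.castSucc + 1)

/-- The largest `d ≤ c` with `d j < b (j + 1)` for all `j` (when `b ≥ 1`). -/
def upperCorner : Fin (n + 1) → ℕ :=
  Fin.snoc (fun j => min (c j.castSucc) (b j.succ - 1)) (c (Fin.last n))

@[simp] lemma lowerCorner_zero : lowerCorner b c 0 = b 0 := rfl

@[simp] lemma lowerCorner_succ (j : Fin n) :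
    lowerCorner b c j.succ = max (b j.succ) (c j.castSucc + 1) := rfl

@[simp] lemma upperCorner_castSucc (j : Fin n) :
    upperCorner b c j.castSucc = min (c j.castSucc) (b j.succ - 1) := by
  simp [upperCorner]

@[simp] lemma upperCorner_last : upperCorner b c (Fin.last n) = c (Fin.last n) := by
  simp [upperCorner]

lemma le_lowerCorner : b ≤ lowerCorner b c := by
  intro i
  cases i using Fin.cases <;> simp

lemma lowerCorner_le (hc : StrictMono c) (hbc : b ≤ c) : lowerCorner b c ≤ c := by
  intro i
  cases i using Fin.cases with
  | zero => exact hbc 0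
  | succ j =>
    have := hc j.castSucc_lt_succ
    simpa [Nat.succ_le_of_lt this] using hbc j.succ

lemma le_upperCorner (hb : StrictMono b) (hbc : b ≤ c) : b ≤ upperCorner b c := by
  intro i
  cases i using Fin.lastCases with
  | last => simpa using hbc (Fin.last n)
  | cast j =>
    have := hb j.castSucc_lt_succ
    simpa [Nat.le_sub_one_of_lt this] using hbc j.castSucc

lemma upperCorner_le : upperCorner b c ≤ c := by
  intro i
  cases i using Fin.lastCases <;> simp

lemma filter_Icc_eq_piFinset_lowerCorner :
    (Icc b c).filter
        (fun d => (∀ i j, i < j → d i < d j) ∧ ∀ j : Fin n, c j.castSucc < d j.succ) =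
      Fintype.piFinset fun i => Icc (lowerCorner b c i) (c i) := by
  ext d
  simp only [mem_filter, mem_Icc, Fintype.mem_piFinset, Pi.le_def]
  constructor
  · rintro ⟨⟨hbd, hdc⟩, -, hchain⟩ i
    refine ⟨?_, hdc i⟩
    cases i using Fin.cases with
    | zero => exact hbd 0
    | succ j => exact (lowerCorner_succ b c j).trans_le (max_le (hbd _) (hchain j))
  · intro hd
    have hchain (j : Fin n) : c j.castSucc < d j.succ := by
      have := (hd j.succ).1
      simp only [lowerCorner_succ] at this
      omega
    have hmono : StrictMono d :=
      Fin.strictMono_iff_lt_succ.mpr fun j => (hd _).2.trans_lt (hchain j)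
    exact ⟨⟨fun i => (le_lowerCorner b c i).trans (hd i).1, fun i => (hd i).2⟩,
      fun _ _ h => hmono h, hchain⟩

lemma filter_Icc_eq_piFinset_upperCorner (hb1 : ∀ i, 1 ≤ b i) :
    (Icc (fun _ => 1) c).filter (fun d => (∀ i j, i < j → d i < d j) ∧
        (∀ j : Fin n, d j.castSucc < b j.succ) ∧ ∀ i, b i ≤ d i) =
      Fintype.piFinset fun i => Icc (b i) (upperCorner b c i) := by
  ext d
  simp only [mem_filter, mem_Icc, Fintype.mem_piFinset, Pi.le_def]
  constructor
  · rintro ⟨⟨-, hdc⟩, -, hchain, hbd⟩ i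
    refine ⟨hbd i, ?_⟩
    cases i using Fin.lastCases with
    | last => simpa using hdc _
    | cast j =>
      have := hchain j
      simp only [upperCorner_castSucc]
      exact le_min (hdc _) (by omega)
  · intro hd
    have hchain (j : Fin n) : d j.castSucc < b j.succ := by
      have := (hd j.castSucc).2
      have := hb1 j.succ
      simp only [upperCorner_castSucc] at *
      omega
    have hmono : StrictMono d :=
      Fin.strictMono_iff_lt_succ.mpr fun j => (hchain j).trans_le (hd _).1
    exact ⟨⟨fun i => (hb1 i).trans (hd i).1, fun i => (hd i).2.trans (upperCorner_le b c i)⟩,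
      fun _ _ h => hmono h, hchain, fun i => (hd i).1⟩

theorem sum_filter_Icc_brkT_left_eq_prod (hc : StrictMono c) (hbc : b ≤ c) :
    ∑ d ∈ (Icc b c).filter (fun d => ∀ i j, i < j → d i < d j),
        brkT c d * (1 - X) ^ (∑ i, (d i - b i)) =
      ∏ j : Fin n, (1 - X) ^ (c j.castSucc + 1 - b j.succ) := by
  calc _ = ∑ d ∈ ((Icc b c).filter (fun d => ∀ i j, i < j → d i < d j)).filter
          (fun d => ∀ j : Fin n, c j.castSucc < d j.succ),
            ∏ i, brk (c i) (d i) * (1 - X) ^ (d i - b i) := by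
        symm
        rw [sum_filter]
        refine sum_congr rfl fun d _ => ?_
        rw [brkT_eq_ite]
        split_ifs
        · rw [prod_mul_distrib, prod_pow_eq_pow_sum]
        · rw [zero_mul]
    _ = ∏ i, ∑ x ∈ Icc (lowerCorner b c i) (c i), brk (c i) x * (1 - X) ^ (x - b i) := by
        rw [filter_filter, filter_Icc_eq_piFinset_lowerCorner, prod_univ_sum]
    _ = ∏ i, (1 - X) ^ (lowerCorner b c i - b i) :=
        prod_congr rfl fun i _ => sum_Icc_brk_mul_pow_sub_left (le_lowerCorner b c i)
          (lowerCorner_le b c hc hbc i)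
    _ = _ := by
        rw [Fin.prod_univ_succ, lowerCorner_zero, Nat.sub_self, pow_zero, one_mul]
        refine prod_congr rfl fun j _ => ?_
        rw [lowerCorner_succ]
        congr 1
        omega

theorem sum_filter_Icc_brkT_right_eq_prod (hb : StrictMono b) (hb1 : ∀ i, 1 ≤ b i)
    (hbc : b ≤ c) :
    ∑ d ∈ (Icc (fun _ => 1) c).filter (fun d => ∀ i j, i < j → d i < d j),
        brkT d b * (1 - X) ^ (∑ i, (c i - d i)) =
      ∏ j : Fin n, (1 - X) ^ (c j.castSucc + 1 - b j.succ) := by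
  calc _ = ∑ d ∈ ((Icc (fun _ => 1) c).filter (fun d => ∀ i j, i < j → d i < d j)).filter
          (fun d => (∀ j : Fin n, d j.castSucc < b j.succ) ∧ ∀ i, b i ≤ d i),
            ∏ i, brk (d i) (b i) * (1 - X) ^ (c i - d i) := by
        symm
        rw [sum_filter]
        refine sum_congr rfl fun d _ => ?_
        split_ifs with h
        · rw [brkT_eq_ite, if_pos h.1, prod_mul_distrib, prod_pow_eq_pow_sum]
        · rcases not_and_or.mp h with hchain | hbd
          · rw [brkT_eq_ite, if_neg hchain, zero_mul]
          · obtain ⟨i, hi⟩ := not_forall.mp hbd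
            rw [brkT_eq_zero_of_lt (not_le.mp hi), zero_mul]
    _ = ∏ i, ∑ x ∈ Icc (b i) (upperCorner b c i), brk x (b i) * (1 - X) ^ (c i - x) := by
        rw [filter_filter, filter_Icc_eq_piFinset_upperCorner b c hb1, prod_univ_sum]
    _ = ∏ i, (1 - X) ^ (c i - upperCorner b c i) :=
        prod_congr rfl fun i _ => sum_Icc_brk_mul_pow_sub_right (le_upperCorner b c hb hbc i)
          (upperCorner_le b c i)
    _ = _ := by
        rw [Fin.prod_univ_castSucc, upperCorner_last, Nat.sub_self, pow_zero, mul_one]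
        refine prod_congr rfl fun j _ => ?_
        rw [upperCorner_castSucc]
        have := hb1 j.succ
        congr 1
        omega

end Tuples

theorem sum_brkT_eq_general (m : ℕ) (b c : Fin (m + 2) → ℕ)
    (hb : StrictMono b) (hc : StrictMono c)
    (hb1 : ∀ i, 1 ≤ b i) :
    (∑ d ∈ (Finset.Icc b c).filter (fun d => ∀ i j, i < j → d i < d j),
        brkT c d * (1 - X) ^ (∑ i, (d i - b i))) =
      (∑ d ∈ (Finset.Icc (fun _ => 1) c).filter (fun d => ∀ i j, i < j → d i < d j),
        brkT d b * (1 - X) ^ (∑ i, (c i - d i))) ∧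
    ((∀ i, b i ≤ c i) →
      (∑ d ∈ (Finset.Icc b c).filter (fun d => ∀ i j, i < j → d i < d j),
          brkT c d * (1 - X) ^ (∑ i, (d i - b i))) =
        ∏ i : Fin (m + 1), (1 - X) ^ (c i.castSucc + 1 - b i.succ)) := by
  by_cases hbc : ∀ i, b i ≤ c i
  · have hleft := sum_filter_Icc_brkT_left_eq_prod b c hc hbc
    exact ⟨hleft.trans (sum_filter_Icc_brkT_right_eq_prod b c hb hb1 hbc).symm, fun _ => hleft⟩
  · refine ⟨?_, fun h => absurd h hbc⟩
    obtain ⟨i, hi⟩ := not_forall.mp hbc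
    rw [Icc_eq_empty (fun h : b ≤ c => hi (h i)), filter_empty, sum_empty, eq_comm]
    refine sum_eq_zero fun d hd => ?_
    have hdc : d i ≤ c i := (mem_Icc.mp (mem_filter.mp hd).1).2 i
    rw [brkT_eq_zero_of_lt (hdc.trans_lt (not_le.mp hi)), zero_mul]

/-- Lemma 2.4: for strictly increasing `l`-tuples (`l = m + 2 ≥ 2`) of positive integers
`b`, `c`, the two bracket sums agree:
`∑_{d ≥ b, d ∈ S_l} [c; d] (1-t)^{∑(dᵢ-bᵢ)} = ∑_{d ≤ c, d ∈ S_l} [d; b] (1-t)^{∑(cᵢ-dᵢ)}`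
(all terms with some `dᵢ > cᵢ`, resp. `dᵢ < bᵢ`, vanish, so the sums below are the full
sums), and when `b ≤ c` componentwise both are `∏_{i=2}^{l} (1-t)^{max(0, c_{i-1}-bᵢ+1)}`. -/
theorem sum_brkT_eq (m : ℕ) (b c : Fin (m + 2) → ℕ)
    (hb : StrictMono b) (hc : StrictMono c)
    (hb1 : ∀ i, 1 ≤ b i) (hc1 : ∀ i, 1 ≤ c i) :
    (∑ d ∈ (Finset.Icc b c).filter (fun d => ∀ i j, i < j → d i < d j),
        brkT c d * (1 - X) ^ (∑ i, (d i - b i))) =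
      (∑ d ∈ (Finset.Icc (fun _ => 1) c).filter (fun d => ∀ i j, i < j → d i < d j),
        brkT d b * (1 - X) ^ (∑ i, (c i - d i))) ∧
    ((∀ i, b i ≤ c i) →
      (∑ d ∈ (Finset.Icc b c).filter (fun d => ∀ i j, i < j → d i < d j),
          brkT c d * (1 - X) ^ (∑ i, (d i - b i))) =
        ∏ i : Fin (m + 1), (1 - X) ^ (c i.castSucc + 1 - b i.succ)) :=
  sum_brkT_eq_general m b c hb hc hb1
end

section
/- Let l ≥ 3, let b_1 < b_2 < ⋯ < b_l be positive integers, and let b > b_l. For each i ≤ l let σ_i be the order-preserving bijection from {b_1,…,b_l} to {b_1,…,b_{i-1}, b_{i+1},…,b_l, b} (i.e., σ_i(b_j) = b_j for j < i, σ_i(b_j) = b_{j+1} for i ≤ j ≤ l-1, and σ_i(b_l) = b). Then for any function f of l-1 variables with values in a commutative ring (e.g., ℚ(t)), ∑_{i=1}^{l} (-1)^i ∑_{d_1 = σ_i(b_1)}^{σ_i(b_2)-1} ⋯ ∑_{d_{l-1} = σ_i(b_{l-1})}^{σ_i(b_l)-1} f(d_1,…,d_{l-1}) = (-1)^l ∑_{d_1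 = b_1}^{b_2 - 1} ⋯ ∑_{d_{l-1} = b_{l-1}}^{b_l - 1} f(d_1,…,d_{l-1}). -/
open Finset

lemma box_split {R : Type*} [AddCommMonoid R] {n : ℕ} (lo hi : Fin n → ℕ) (c : Fin n) (y : ℕ)
    (h1 : lo c ≤ y) (h2 : y ≤ hi c + 1) (hy : 1 ≤ y) (f : (Fin n → ℕ) → R) :
    ∑ d ∈ Finset.Icc lo hi, f d =
      (∑ d ∈ Finset.Icc lo (Function.update hi c (y - 1)), f d) +
      ∑ d ∈ Finset.Icc (Function.update lo c y) hi, f d := by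
  have hdisj : Disjoint (Finset.Icc lo (Function.update hi c (y - 1)))
      (Finset.Icc (Function.update lo c y) hi) := by
    rw [Finset.disjoint_left]
    intro d hd1 hd2
    rw [Finset.mem_Icc] at hd1 hd2
    have h1' := hd1.2 c
    have h2' := hd2.1 c
    simp only [Function.update_self] at h1' h2'
    omega
  rw [← Finset.sum_union hdisj]
  congr 1
  ext d
  simp only [Finset.mem_union, Finset.mem_Icc, Pi.le_def]
  constructor
  · rintro ⟨hl, hr⟩
    by_cases hdc : d c ≤ y - 1
    · left
      refine ⟨hl, fun i => ?_⟩
      rcases eq_or_ne i c with rfl | h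
      · simpa using hdc
      · simp only [Function.update_of_ne h]; exact hr i
    · right
      refine ⟨fun i => ?_, hr⟩
      rcases eq_or_ne i c with rfl | h
      · simp only [Function.update_self]; omega
      · simp only [Function.update_of_ne h]; exact hl i
  · rintro (⟨hl, hr⟩ | ⟨hl, hr⟩)
    · refine ⟨hl, fun i => ?_⟩
      have := hr i
      rcases eq_or_ne i c with rfl | h
      · simp only [Function.update_self] at this; omega
      · simpa only [Function.update_of_ne h] using this
    · refine ⟨fun i => ?_, hr⟩
      have := hl i
      rcases eq_or_ne i c with rfl | h
      · simp only [Function.update_self] at this; omega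
      · simpa only [Function.update_of_ne h] using this

/-- Lemma 2.6: alternating sum of iterated (box) sums.  Here `l = m + 3 ≥ 3`,
`b₁ < ⋯ < b_l` are positive integers, `b' > b_l`, and `σ i` encodes the order-preserving
bijection `σᵢ : {b₁,…,b_l} → {b₁,…,b̂ᵢ,…,b_l, b'}`, i.e. `σ i j = σᵢ(b_j)`.  For any
function `f` of `l - 1` natural-number variables with values in a commutative ring,
`∑_{i=1}^{l} (-1)ⁱ ∑_{d₁=σᵢ(b₁)}^{σᵢ(b₂)-1} ⋯ ∑_{d_{l-1}=σᵢ(b_{l-1})}^{σᵢ(b_l)-1} f(d)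
  = (-1)ˡ ∑_{d₁=b₁}^{b₂-1} ⋯ ∑_{d_{l-1}=b_{l-1}}^{b_l-1} f(d)`. -/
theorem alternating_box_sum {R : Type*} [CommRing R] (m : ℕ)
    (b : Fin (m + 3) → ℕ) (hb : StrictMono b) (hb1 : ∀ i, 1 ≤ b i)
    (b' : ℕ) (hb' : b (Fin.last (m + 2)) < b')
    (f : (Fin (m + 2) → ℕ) → R)
    (σ : Fin (m + 3) → Fin (m + 3) → ℕ)
    (hσ : ∀ i j : Fin (m + 3), σ i j =
      if (j : ℕ) < (i : ℕ) then b j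
      else if h : (j : ℕ) + 1 < m + 3 then b ⟨(j : ℕ) + 1, h⟩ else b') :
    (∑ i : Fin (m + 3), (-1 : R) ^ ((i : ℕ) + 1) *
        ∑ d ∈ Finset.Icc (fun j : Fin (m + 2) => σ i j.castSucc)
            (fun j : Fin (m + 2) => σ i j.succ - 1), f d) =
      (-1 : R) ^ (m + 3) *
        ∑ d ∈ Finset.Icc (fun j : Fin (m + 2) => b j.castSucc)
            (fun j : Fin (m + 2) => b j.succ - 1), f d := by
  classical
  set Bex : ℕ → ℕ := fun s => if h : s < m + 3 then b ⟨s, h⟩ else b' with hBex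
  have hBmono : ∀ s, s ≤ m + 2 → Bex s < Bex (s + 1) := by
    intro s hs
    by_cases h : s + 1 < m + 3
    · have hs' : s < m + 3 := by omega
      simp only [hBex, dif_pos h, dif_pos hs']
      exact hb (by simp [Fin.lt_def])
    · have hs2 : s = m + 2 := by omega
      subst hs2
      simp only [hBex, dif_pos (by omega : m + 2 < m + 3), dif_neg h]
      exact hb'
  have hB1 : ∀ s, 1 ≤ Bex s := by
    intro s
    by_cases h : s < m + 3
    · simp only [hBex, dif_pos h]; exact hb1 _
    · simp only [hBex, dif_neg h]
      have := hb1 (Fin.last (m + 2)); omega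
  -- σ in terms of Bex
  have hσc : ∀ (i : Fin (m + 3)) (j : Fin (m + 2)),
      σ i j.castSucc = if (j : ℕ) < (i : ℕ) then Bex j else Bex (j + 1) := by
    intro i j
    rw [hσ]
    have h1 : ((j.castSucc : Fin (m+3)) : ℕ) = (j : ℕ) := rfl
    have h2 : (j : ℕ) + 1 < m + 3 := by omega
    have h3 : (j : ℕ) < m + 3 := by omega
    rw [h1]
    simp only [dif_pos h2, hBex, dif_pos h3]
    congr 1
  have hσs : ∀ (i : Fin (m + 3)) (j : Fin (m + 2)),
      σ i j.succ = if (j : ℕ) + 1 < (i : ℕ) then Bex (j + 1) else Bex (j + 2) := by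
    intro i j
    rw [hσ]
    have h1 : ((j.succ : Fin (m+3)) : ℕ) = (j : ℕ) + 1 := rfl
    have h3 : (j : ℕ) + 1 < m + 3 := by omega
    rw [h1]
    by_cases h : (j : ℕ) + 1 + 1 < m + 3
    · simp only [dif_pos h, hBex, dif_pos h3]
      congr 1
    · simp only [dif_neg h, hBex, dif_pos h3, dif_neg (by omega : ¬ ((j:ℕ) + 2 < m + 3))]
      congr 1
  -- the skip-boxes
  set A : ℕ → R := fun k =>
    ∑ d ∈ Finset.Icc (fun j : Fin (m + 2) => if (j : ℕ) < k then Bex j else Bex (j + 1))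
        (fun j : Fin (m + 2) => (if (j : ℕ) < k then Bex (j + 1) else Bex (j + 2)) - 1), f d
    with hA
  have hterm : ∀ i : Fin (m + 3),
      (∑ d ∈ Finset.Icc (fun j : Fin (m + 2) => σ i j.castSucc)
          (fun j : Fin (m + 2) => σ i j.succ - 1), f d) =
        if (i : ℕ) = 0 then A 0 else A ((i : ℕ) - 1) + A (i : ℕ) := by
    intro i
    by_cases hi0 : (i : ℕ) = 0
    · rw [if_pos hi0, hA]
      have hlo : (fun j : Fin (m + 2) => σ i j.castSucc) =
          fun j : Fin (m + 2) => if (j : ℕ) < 0 then Bex j else Bex (j + 1) := by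
        funext j; rw [hσc]; simp [hi0]
      have hhi : (fun j : Fin (m + 2) => σ i j.succ - 1) =
          fun j : Fin (m + 2) => (if (j : ℕ) < 0 then Bex (j + 1) else Bex (j + 2)) - 1 := by
        funext j; rw [hσs]; simp [hi0]
      rw [hlo, hhi]
    · rw [if_neg hi0]
      obtain ⟨i', hii'⟩ : ∃ i', (i : ℕ) = i' + 1 := ⟨(i : ℕ) - 1, by omega⟩
      have hi'lt : i' < m + 2 := by have := i.isLt; omega
      set c : Fin (m + 2) := ⟨i', hi'lt⟩ with hc
      have key := box_split (R := R)
        (fun j : Fin (m + 2) => if (j : ℕ) < i' + 1 then Bex j else Bex (j + 1))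
        (fun j : Fin (m + 2) => (if (j : ℕ) < i' then Bex (j + 1) else Bex (j + 2)) - 1)
        c (Bex (i' + 1))
        (by simp only [hc, if_pos (Nat.lt_succ_self i')]
            exact le_of_lt (hBmono i' (by omega)))
        (by simp only [hc, if_neg (lt_irrefl i')]
            have h := hBmono (i' + 1) (by omega)
            rw [show i' + 1 + 1 = i' + 2 from rfl] at h
            have := hB1 (i' + 2)
            omega)
        (hB1 _) f
      have hbox : (Finset.Icc (fun j : Fin (m + 2) => σ i j.castSucc)
          (fun j : Fin (m + 2) => σ i j.succ - 1)) =
          Finset.Icc (fun j : Fin (m + 2) => if (j : ℕ) < i' + 1 then Bex j else Bex (j + 1))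
            (fun j : Fin (m + 2) => (if (j : ℕ) < i' then Bex (j + 1) else Bex (j + 2)) - 1) := by
        have hlo : (fun j : Fin (m + 2) => σ i j.castSucc) =
            fun j : Fin (m + 2) => if (j : ℕ) < i' + 1 then Bex j else Bex (j + 1) := by
          funext j; rw [hσc, hii']
        have hhi : (fun j : Fin (m + 2) => σ i j.succ - 1) =
            fun j : Fin (m + 2) => (if (j : ℕ) < i' then Bex (j + 1) else Bex (j + 2)) - 1 := by
          funext j; rw [hσs, hii']
          congr 1
          by_cases h : (j : ℕ) < i'
          · rw [if_pos (by omega), if_pos h]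
          · rw [if_neg (by omega), if_neg h]
        rw [hlo, hhi]
      rw [hbox, key, hA]
      have e1 : Function.update
          (fun j : Fin (m + 2) => (if (j : ℕ) < i' then Bex (j + 1) else Bex (j + 2)) - 1) c
          (Bex (i' + 1) - 1) =
          fun j : Fin (m + 2) => (if (j : ℕ) < i' + 1 then Bex (j + 1) else Bex (j + 2)) - 1 := by
        funext j
        rcases eq_or_ne j c with rfl | h
        · simp [hc]
        · rw [Function.update_of_ne h]
          have hj : (j : ℕ) ≠ i' := fun hj => h (Fin.ext hj)
          by_cases h' : (j : ℕ) < i'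
          · rw [if_pos h', if_pos (by omega)]
          · rw [if_neg h', if_neg (by omega)]
      have e2 : Function.update
          (fun j : Fin (m + 2) => if (j : ℕ) < i' + 1 then Bex j else Bex (j + 1)) c
          (Bex (i' + 1)) =
          fun j : Fin (m + 2) => if (j : ℕ) < i' then Bex j else Bex (j + 1) := by
        funext j
        rcases eq_or_ne j c with rfl | h
        · simp [hc]
        · rw [Function.update_of_ne h]
          have hj : (j : ℕ) ≠ i' := fun hj => h (Fin.ext hj)
          by_cases h' : (j : ℕ) < i'
          · rw [if_pos (by omega), if_pos h']
          · rw [if_neg (by omega), if_neg h']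
      rw [e1, e2, hii']
      simp only [Nat.add_sub_cancel]
      exact add_comm _ _
  -- telescoping
  set g : ℕ → R := fun k => if k = 0 then (0 : R) else (-1) ^ k * A (k - 1) with hg
  have hgsum := Finset.sum_range_sub g (m + 3)
  calc (∑ i : Fin (m + 3), (-1 : R) ^ ((i : ℕ) + 1) *
        ∑ d ∈ Finset.Icc (fun j : Fin (m + 2) => σ i j.castSucc)
            (fun j : Fin (m + 2) => σ i j.succ - 1), f d)
      = ∑ i : Fin (m + 3), (-1 : R) ^ ((i : ℕ) + 1) *
          (if (i : ℕ) = 0 then A 0 else A ((i : ℕ) - 1) + A (i : ℕ)) :=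
        Finset.sum_congr rfl fun i _ => by rw [hterm]
    _ = ∑ k ∈ Finset.range (m + 3), (-1 : R) ^ (k + 1) *
          (if k = 0 then A 0 else A (k - 1) + A k) :=
        Fin.sum_univ_eq_sum_range (fun k => (-1 : R) ^ (k + 1) *
          (if k = 0 then A 0 else A (k - 1) + A k)) (m + 3)
    _ = ∑ k ∈ Finset.range (m + 3), (g (k + 1) - g k) := by
        refine Finset.sum_congr rfl fun k _ => ?_
        rcases Nat.eq_zero_or_pos k with rfl | hk
        · simp [hg]
        · obtain ⟨k', rfl⟩ : ∃ k', k = k' + 1 := ⟨k - 1, by omega⟩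
          simp only [hg]
          rw [if_neg (Nat.succ_ne_zero _), if_neg (Nat.succ_ne_zero _),
            if_neg (Nat.succ_ne_zero _)]
          simp only [Nat.add_sub_cancel]
          ring
    _ = g (m + 3) - g 0 := hgsum
    _ = (-1 : R) ^ (m + 3) * A (m + 2) := by
        simp only [hg]
        rw [if_neg (Nat.succ_ne_zero _)]
        norm_num
    _ = (-1 : R) ^ (m + 3) *
        ∑ d ∈ Finset.Icc (fun j : Fin (m + 2) => b j.castSucc)
            (fun j : Fin (m + 2) => b j.succ - 1), f d := by
        have hlo : (fun j : Fin (m + 2) => if (j : ℕ) < m + 2 then Bex j else Bex (j + 1)) =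
            fun j : Fin (m + 2) => b j.castSucc := by
          funext j
          rw [if_pos (by omega : (j : ℕ) < m + 2)]
          simp only [hBex, dif_pos (by omega : (j : ℕ) < m + 3)]
          congr 1
        have hhi : (fun j : Fin (m + 2) =>
              (if (j : ℕ) < m + 2 then Bex (j + 1) else Bex (j + 2)) - 1) =
            fun j : Fin (m + 2) => b j.succ - 1 := by
          funext j
          rw [if_pos (by omega : (j : ℕ) < m + 2)]
          simp only [hBex, dif_pos (by omega : (j : ℕ) + 1 < m + 3)]
          congr 2
        simp only [hA]
        rw [hlo, hhi]
end

section
/- Let r ≥ 1, n ≥ 1, and let b_1 < b_2 < ⋯ < b_r ≤ n be positive integers. Define the r×r matrix M over ℚ[t] by M_{i,j} = ∑_{k ≥ 0} C(r-i, k) C(n-b_j, k) t^k. Then det(M) = c · t^{\binom{r}{2}} for some rational constant c (i.e., t^{\binom{r}{2}} divides det(M) and the quotient is a constant polynomial). -/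
open Polynomial Finset

/-- Lemma 2.1 (key determinant computation): for `1 ≤ b₁ < ⋯ < b_r ≤ n`, the determinant
of the matrix `M_{i,j} = ∑_k C(r-i, k) C(n-b_j, k) tᵏ` (rows indexed by `i = 1, …, r`,
so row `i` corresponds to `r - i = r - 1 - (i-1)`) is a constant times `t^{C(r,2)}`. -/
theorem det_corner_matrix (r n : ℕ) (hr : 1 ≤ r) (hn : 1 ≤ n)
    (b : Fin r → ℕ) (hb : StrictMono b) (hb1 : ∀ i, 1 ≤ b i) (hbn : ∀ i, b i ≤ n) :
    ∃ cst : ℚ,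
      Matrix.det (Matrix.of fun i j : Fin r =>
          ∑ k ∈ Finset.range (n + 1),
            (((r - 1 - (i : ℕ)).choose k * (n - b j).choose k : ℕ) : ℚ) •
              (X : Polynomial ℚ) ^ k) =
        Polynomial.C cst * X ^ r.choose 2 := by
  -- b i ≥ i + 1, hence r ≤ n + 1 range inclusion
  have hbi : ∀ m (h : m < r), m < b ⟨m, h⟩ := by
    intro m
    induction m with
    | zero => exact fun h => lt_of_lt_of_le Nat.zero_lt_one (hb1 _)
    | succ m ih =>
      intro hm
      have h1 : m < r := Nat.lt_of_succ_lt hm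
      have h2 : b ⟨m, h1⟩ < b ⟨m + 1, hm⟩ := hb (by simp [Fin.lt_def])
      have := ih h1
      omega
  have hrn : r ≤ n + 1 := by
    have h1 : r - 1 < r := Nat.sub_lt hr Nat.zero_lt_one
    have h2 := hbi (r - 1) h1
    have h3 := hbn ⟨r - 1, h1⟩
    omega
  set A : Matrix (Fin r) (Fin r) ℚ :=
    Matrix.of fun i k : Fin r => (((r - 1 - (i : ℕ)).choose k : ℕ) : ℚ) with hA
  set B : Matrix (Fin r) (Fin r) ℚ :=
    Matrix.of fun k j : Fin r => (((n - b j).choose k : ℕ) : ℚ) with hB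
  refine ⟨A.det * B.det, ?_⟩
  have key : (Matrix.of fun i j : Fin r =>
          ∑ k ∈ Finset.range (n + 1),
            (((r - 1 - (i : ℕ)).choose k * (n - b j).choose k : ℕ) : ℚ) •
              (X : Polynomial ℚ) ^ k) =
      (A.map (Polynomial.C)) *
        (Matrix.diagonal fun k : Fin r => (X : Polynomial ℚ) ^ (k : ℕ)) *
        (B.map (Polynomial.C)) := by
    refine Matrix.ext fun i j => ?_
    rw [Matrix.mul_apply]
    have hsub : Finset.range r ⊆ Finset.range (n + 1) := Finset.range_subset_range.2 hrn
    have hzero : ∀ k ∈ Finset.range (n + 1), k ∉ Finset.range r →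
        (((r - 1 - (i : ℕ)).choose k * (n - b j).choose k : ℕ) : ℚ) •
          (X : Polynomial ℚ) ^ k = 0 := by
      intro k _ hk
      rw [Finset.mem_range, not_lt] at hk
      have : (r - 1 - (i : ℕ)).choose k = 0 :=
        Nat.choose_eq_zero_of_lt (by omega)
      simp [this]
    rw [Matrix.of_apply, ← Finset.sum_subset hsub hzero, ← Fin.sum_univ_eq_sum_range
      (fun k => (((r - 1 - (i : ℕ)).choose k * (n - b j).choose k : ℕ) : ℚ) •
          (X : Polynomial ℚ) ^ k) r]
    refine Finset.sum_congr rfl fun k _ => ?_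
    rw [Matrix.mul_apply, Finset.sum_eq_single k
      (fun l _ hl => by simp [Matrix.diagonal_apply_ne _ hl])
      (fun h => absurd (Finset.mem_univ k) h)]
    simp only [Matrix.map_apply, Matrix.diagonal_apply_eq, hA, hB, Matrix.of_apply]
    rw [Polynomial.smul_eq_C_mul]
    push_cast
    rw [map_mul]
    ring
  have hAd : (A.map (Polynomial.C : ℚ →+* Polynomial ℚ)).det = Polynomial.C A.det := by
    rw [← RingHom.mapMatrix_apply, ← RingHom.map_det]
  have hBd : (B.map (Polynomial.C : ℚ →+* Polynomial ℚ)).det = Polynomial.C B.det := by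
    rw [← RingHom.mapMatrix_apply, ← RingHom.map_det]
  rw [key, Matrix.det_mul, Matrix.det_mul, Matrix.det_diagonal,
    Finset.prod_pow_eq_pow_sum]
  rw [show ((A.map ⇑(Polynomial.C)).det) = Polynomial.C A.det from hAd,
    show ((B.map ⇑(Polynomial.C)).det) = Polynomial.C B.det from hBd]
  have hsum : ∑ k : Fin r, (k : ℕ) = r.choose 2 := by
    rw [Fin.sum_univ_eq_sum_range (fun k => k) r, Finset.sum_range_id, Nat.choose_two_right]
  rw [hsum, map_mul]
  ring
end

section
/- Let r, n be positive integers with b_1 < ⋯ < b_r ≤ n. Define M_{i,j} = ∑_{k≥0} C(r-i,k) C(n-b_j,k) t^k ∈ ℚ[t]. Then det(M) evaluated at t = 1 equals det(N) where N_{i,j} = C((r-i)+(n-b_j), r-i) is the matrix of total path counts from (i,n) to (r,b_j); moreover t^{-\binom{r}{2}} det(M) is the constant polynomial equal to the number of r-tuples of non-intersecting paths from P_i = (i,n) to Q_i = (r,b_i), i = 1,…,r, in the r×n grid. -/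
open Polynomial Finset

/-- The order on the grid: `(i,j) ≤ (i',j')` iff `i' ≤ i` and `j ≤ j'`. -/
def ple (x y : ℕ × ℕ) : Prop := y.1 ≤ x.1 ∧ x.2 ≤ y.2

/-- `C` is a path from `P` to `Q` inside the region `Y`: a maximal chain (for the order
`ple`) in `Y` with end points `P` and `Q`. -/
def IsPath (Y : Set (ℕ × ℕ)) (P Q : ℕ × ℕ) (C : Finset (ℕ × ℕ)) : Prop :=
  (C : Set (ℕ × ℕ)) ⊆ Y ∧ P ∈ C ∧ Q ∈ C ∧
  (∀ x ∈ C, ple Q x ∧ ple x P) ∧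
  (∀ x ∈ C, ∀ y ∈ C, ple x y ∨ ple y x) ∧
  (∀ z ∈ Y, ple Q z → ple z P → (∀ x ∈ C, ple x z ∨ ple z x) → z ∈ C)

/-- Number of corners of a path: points `(i,j) ∈ C` with `(i-1,j) ∈ C` and `(i,j-1) ∈ C`. -/
def cornersCount (C : Finset (ℕ × ℕ)) : ℕ :=
  (C.filter (fun p => (p.1 - 1, p.2) ∈ C ∧ (p.1, p.2 - 1) ∈ C)).card

/-- Number of paths from `P` to `Q` in `Y` with exactly `k` corners. -/
noncomputable def pathCount (Y : Set (ℕ × ℕ)) (P Q : ℕ × ℕ) (k : ℕ) : ℕ :=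
  Set.ncard {C : Finset (ℕ × ℕ) | IsPath Y P Q C ∧ cornersCount C = k}

/-- Corner-counting generating polynomial for single paths; `N` is any bound larger than
the possible number of corners, so that the sum agrees with `∑_{k ≥ 0} w_k(P,Q) tᵏ`. -/
noncomputable def Wpoly (Y : Set (ℕ × ℕ)) (P Q : ℕ × ℕ) (N : ℕ) : Polynomial ℚ :=
  ∑ k ∈ Finset.range N, (pathCount Y P Q k : Polynomial ℚ) * X ^ k

/-- Number of `r`-tuples of pairwise disjoint paths from `P i` to `Q i` in `Y` with `k`
corners in total. -/
noncomputable def tupleCount (Y : Set (ℕ × ℕ)) {r : ℕ} (P Q : Fin r → ℕ × ℕ) (k : ℕ) : ℕ :=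
  Set.ncard {C : Fin r → Finset (ℕ × ℕ) |
    (∀ i, IsPath Y (P i) (Q i) (C i)) ∧ (∀ i j, i ≠ j → Disjoint (C i) (C j)) ∧
    ∑ i, cornersCount (C i) = k}

/-- Total number of `r`-tuples of pairwise disjoint paths from `P i` to `Q i` in `Y`. -/
noncomputable def tupleCountAll (Y : Set (ℕ × ℕ)) {r : ℕ} (P Q : Fin r → ℕ × ℕ) : ℕ :=
  Set.ncard {C : Fin r → Finset (ℕ × ℕ) |
    (∀ i, IsPath Y (P i) (Q i) (C i)) ∧ (∀ i j, i ≠ j → Disjoint (C i) (C j))}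

/-- Corner-counting generating polynomial for `r`-tuples of non-intersecting paths. -/
noncomputable def WTpoly (Y : Set (ℕ × ℕ)) {r : ℕ} (P Q : Fin r → ℕ × ℕ) (N : ℕ) :
    Polynomial ℚ :=
  ∑ k ∈ Finset.range N, (tupleCount Y P Q k : Polynomial ℚ) * X ^ k

/-- Rectangular grid region `{(i,j) : 1 ≤ i ≤ m, 1 ≤ j ≤ n}`. -/
def grid (m n : ℕ) : Set (ℕ × ℕ) :=
  {p | 1 ≤ p.1 ∧ p.1 ≤ m ∧ 1 ≤ p.2 ∧ p.2 ≤ n}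

/-- One-sided ladder-shaped region with (weakly decreasing) height function `h`. -/
def ladder (m n : ℕ) (h : ℕ → ℕ) : Set (ℕ × ℕ) :=
  {p | 1 ≤ p.1 ∧ p.1 ≤ m ∧ 1 ≤ p.2 ∧ p.2 ≤ n ∧ p.2 ≤ h p.1}



/-! ### horizontal segments -/

def hseg (R a c : ℕ) : Finset (ℕ × ℕ) := (Finset.Icc a c).image (fun j => (R, j))

lemma mem_hseg {x : ℕ × ℕ} {R a c : ℕ} : x ∈ hseg R a c ↔ x.1 = R ∧ a ≤ x.2 ∧ x.2 ≤ c := by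
  constructor
  · intro hx
    obtain ⟨j, hj, rfl⟩ := Finset.mem_image.1 hx
    exact ⟨rfl, (Finset.mem_Icc.1 hj).1, (Finset.mem_Icc.1 hj).2⟩
  · rintro ⟨h1, h2, h3⟩
    exact Finset.mem_image.2 ⟨x.2, Finset.mem_Icc.2 ⟨h2, h3⟩, by rw [← h1]⟩

lemma hseg_isPath {R' R q nn : ℕ} (h1 : 1 ≤ q) (hqn : q ≤ nn) (hR : 1 ≤ R) (hRR : R ≤ R') :
    IsPath (grid R' nn) (R, nn) (R, q) (hseg R q nn) := by
  refine ⟨?_, ?_, ?_, ?_, ?_, ?_⟩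
  · intro x hx
    rcases mem_hseg.1 hx with ⟨hx1, hx2, hx3⟩
    exact ⟨by omega, by omega, by omega, hx3⟩
  · exact mem_hseg.2 ⟨rfl, hqn, le_rfl⟩
  · exact mem_hseg.2 ⟨rfl, le_rfl, hqn⟩
  · intro x hx
    rcases mem_hseg.1 hx with ⟨hx1, hx2, hx3⟩
    exact ⟨⟨by omega, hx2⟩, ⟨by omega, hx3⟩⟩
  · intro x hx y hy
    rcases mem_hseg.1 hx with ⟨hx1, hx2, hx3⟩
    rcases mem_hseg.1 hy with ⟨hy1, hy2, hy3⟩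
    rcases le_total x.2 y.2 with h | h
    · exact Or.inl ⟨by omega, h⟩
    · exact Or.inr ⟨by omega, h⟩
  · intro z hz hQz hzP _
    exact mem_hseg.2 ⟨le_antisymm hQz.1 hzP.1, hQz.2, hzP.2⟩

lemma isPath_same_row_eq {R' R q nn : ℕ} {C : Finset (ℕ × ℕ)}
    (h : IsPath (grid R' nn) (R, nn) (R, q) C) : C = hseg R q nn := by
  obtain ⟨hsub, hP, hQ, hbd, hch, hmax⟩ := h
  have h1q : 1 ≤ q := (hsub hQ).2.2.1
  have hqn : q ≤ nn := (hbd _ hP).1.2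
  have hPg := hsub hP
  apply Finset.Subset.antisymm
  · intro x hx
    have := hbd x hx
    exact mem_hseg.2 ⟨le_antisymm this.1.1 this.2.1, this.1.2, this.2.2⟩
  · intro x hx
    rcases mem_hseg.1 hx with ⟨hx1, hx2, hx3⟩
    have hxg : x ∈ grid R' nn := by
      refine ⟨?_, ?_, ?_, hx3⟩
      · simp only [grid, Set.mem_setOf_eq] at hPg; omega
      · simp only [grid, Set.mem_setOf_eq] at hPg; omega
      · omega
    refine hmax x hxg ⟨by omega, hx2⟩ ⟨by omega, hx3⟩ ?_
    intro y hy
    have hy1 : y.1 = R := le_antisymm (hbd y hy).1.1 (hbd y hy).2.1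
    rcases le_total x.2 y.2 with h' | h'
    · exact Or.inr ⟨by omega, h'⟩
    · exact Or.inl ⟨by omega, h'⟩

/-! ### least/greatest elements of chains -/

lemma chain_exists_least (s : Finset (ℕ × ℕ))
    (hch : ∀ x ∈ s, ∀ y ∈ s, ple x y ∨ ple y x) (hne : s.Nonempty) :
    ∃ u ∈ s, ∀ x ∈ s, ple u x := by
  classical
  induction s using Finset.induction_on with
  | empty => simp at hne
  | @insert a s ha ih =>
    by_cases hs : s.Nonempty
    · obtain ⟨u, hu, hul⟩ := ih (fun x hx y hy => hch x (Finset.mem_insert_of_mem hx) y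
        (Finset.mem_insert_of_mem hy)) hs
      rcases hch a (Finset.mem_insert_self a s) u (Finset.mem_insert_of_mem hu) with h | h
      · refine ⟨a, Finset.mem_insert_self a s, ?_⟩
        intro x hx
        rcases Finset.mem_insert.1 hx with rfl | hx
        · exact ⟨le_rfl, le_rfl⟩
        · exact ⟨le_trans (hul x hx).1 h.1, le_trans h.2 (hul x hx).2⟩
      · refine ⟨u, Finset.mem_insert_of_mem hu, ?_⟩
        intro x hx
        rcases Finset.mem_insert.1 hx with rfl | hx
        · exact h
        · exact hul x hx
    · refine ⟨a, Finset.mem_insert_self a s, ?_⟩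
      intro x hx
      rcases Finset.mem_insert.1 hx with rfl | hx
      · exact ⟨le_rfl, le_rfl⟩
      · exact absurd ⟨x, hx⟩ hs

lemma chain_exists_greatest (s : Finset (ℕ × ℕ))
    (hch : ∀ x ∈ s, ∀ y ∈ s, ple x y ∨ ple y x) (hne : s.Nonempty) :
    ∃ u ∈ s, ∀ x ∈ s, ple x u := by
  classical
  induction s using Finset.induction_on with
  | empty => simp at hne
  | @insert a s ha ih =>
    by_cases hs : s.Nonempty
    · obtain ⟨u, hu, hul⟩ := ih (fun x hx y hy => hch x (Finset.mem_insert_of_mem hx) y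
        (Finset.mem_insert_of_mem hy)) hs
      rcases hch a (Finset.mem_insert_self a s) u (Finset.mem_insert_of_mem hu) with h | h
      · refine ⟨u, Finset.mem_insert_of_mem hu, ?_⟩
        intro x hx
        rcases Finset.mem_insert.1 hx with rfl | hx
        · exact h
        · exact hul x hx
      · refine ⟨a, Finset.mem_insert_self a s, ?_⟩
        intro x hx
        rcases Finset.mem_insert.1 hx with rfl | hx
        · exact ⟨le_rfl, le_rfl⟩
        · exact ⟨le_trans h.1 (hul x hx).1, le_trans (hul x hx).2 h.2⟩
    · refine ⟨a, Finset.mem_insert_self a s, ?_⟩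
      intro x hx
      rcases Finset.mem_insert.1 hx with rfl | hx
      · exact ⟨le_rfl, le_rfl⟩
      · exact absurd ⟨x, hx⟩ hs

/-! ### every intermediate row is hit -/

lemma path_row_nonempty {Rg nn p q R : ℕ} {C : Finset (ℕ × ℕ)}
    (h : IsPath (grid Rg nn) (p, nn) (R, q) C) (m : ℕ) (hm1 : p ≤ m) (hm2 : m ≤ R) :
    ∃ j, (m, j) ∈ C := by
  obtain ⟨hsub, hP, hQ, hbd, hch, hmax⟩ := h
  by_contra hrow
  push_neg at hrow
  classical
  set A := C.filter (fun x => x.1 < m) with hA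
  set B := C.filter (fun x => m < x.1) with hB
  have hPg : (1:ℕ) ≤ p ∧ p ≤ Rg ∧ 1 ≤ nn ∧ nn ≤ nn := hsub hP
  have hQg : (1:ℕ) ≤ R ∧ R ≤ Rg ∧ 1 ≤ q ∧ q ≤ nn := hsub hQ
  have hPA : (p, nn) ∈ A := by
    rcases lt_or_eq_of_le hm1 with h' | h'
    · exact Finset.mem_filter.2 ⟨hP, h'⟩
    · exact absurd (h' ▸ hP) (hrow nn)
  have hQB : (R, q) ∈ B := by
    rcases lt_or_eq_of_le hm2 with h' | h'
    · exact Finset.mem_filter.2 ⟨hQ, h'⟩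
    · exact absurd (h' ▸ hQ) (hrow q)
  obtain ⟨u, huA, hul⟩ := chain_exists_least A
    (fun x hx y hy => hch x (Finset.mem_filter.1 hx).1 y (Finset.mem_filter.1 hy).1) ⟨_, hPA⟩
  obtain ⟨v, hvB, hvg⟩ := chain_exists_greatest B
    (fun x hx y hy => hch x (Finset.mem_filter.1 hx).1 y (Finset.mem_filter.1 hy).1) ⟨_, hQB⟩
  have huC : u ∈ C := (Finset.mem_filter.1 huA).1
  have hvC : v ∈ C := (Finset.mem_filter.1 hvB).1
  have hum : u.1 < m := (Finset.mem_filter.1 huA).2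
  have hvm : m < v.1 := (Finset.mem_filter.1 hvB).2
  have hvu : ple v u := by
    rcases hch v hvC u huC with h' | h'
    · exact h'
    · exact absurd h'.1 (by omega)
  have hug : u ∈ grid Rg nn := hsub huC
  have hu2n : u.2 ≤ nn := (hbd u huC).2.2
  have hqu2 : q ≤ u.2 := (hbd u huC).1.2
  have h1u2 : 1 ≤ u.2 := hug.2.2.1
  have hz : (m, u.2) ∈ C := by
    refine hmax (m, u.2) ⟨by omega, by omega, h1u2, hu2n⟩
      ⟨by omega, hqu2⟩ ⟨by omega, hu2n⟩ ?_
    intro x hx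
    rcases lt_trichotomy x.1 m with h' | h' | h'
    · have hxA : x ∈ A := Finset.mem_filter.2 ⟨hx, h'⟩
      exact Or.inr ⟨by omega, (hul x hxA).2⟩
    · exfalso
      have : (m, x.2) ∈ C := by
        have : x = (m, x.2) := by rw [← h']
        rwa [this] at hx
      exact hrow x.2 this
    · have hxB : x ∈ B := Finset.mem_filter.2 ⟨hx, h'⟩
      exact Or.inl ⟨by omega, le_trans (hvg x hxB).2 hvu.2⟩
  exact hrow u.2 hz

noncomputable def minCol (C : Finset (ℕ × ℕ)) (m : ℕ) : ℕ := sInf {j | (m, j) ∈ C}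

lemma minCol_path_end {Rg nn p q R : ℕ} {C : Finset (ℕ × ℕ)}
    (h : IsPath (grid Rg nn) (p, nn) (R, q) C) : minCol C R = q := by
  obtain ⟨hsub, hP, hQ, hbd, hch, hmax⟩ := h
  have h1 : minCol C R ≤ q := Nat.sInf_le (by exact hQ)
  have h2 : q ≤ minCol C R := by
    apply le_csInf ⟨q, hQ⟩
    intro j hj
    exact (hbd (R, j) hj).1.2
  omega

lemma path_split {R nn p q : ℕ} {C : Finset (ℕ × ℕ)}
    (h : IsPath (grid (R+1) nn) (p, nn) (R+1, q) C) (hp : p ≤ R) :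
    q ≤ minCol C R ∧
    IsPath (grid R nn) (p, nn) (R, minCol C R) (C.filter (fun x => x.1 ≤ R)) ∧
    C = (C.filter fun x => x.1 ≤ R) ∪ hseg (R+1) q (minCol C R) := by
  classical
  obtain ⟨hsub, hP, hQ, hbd, hch, hmax⟩ := h
  set q' := minCol C R with hq'
  have hrne : (R, q') ∈ C := by
    obtain ⟨j, hj⟩ := path_row_nonempty ⟨hsub, hP, hQ, hbd, hch, hmax⟩ R hp (by omega)
    exact Nat.sInf_mem (⟨j, hj⟩ : {j | (R, j) ∈ C}.Nonempty)
  have hq'le : ∀ j, (R, j) ∈ C → q' ≤ j := fun j hj => Nat.sInf_le hj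
  have hq'g : (1:ℕ) ≤ R ∧ R ≤ R+1 ∧ 1 ≤ q' ∧ q' ≤ nn := hsub hrne
  have hPg : (1:ℕ) ≤ p ∧ p ≤ R+1 ∧ 1 ≤ nn ∧ nn ≤ nn := hsub hP
  have hQg : (1:ℕ) ≤ R+1 ∧ R+1 ≤ R+1 ∧ 1 ≤ q ∧ q ≤ nn := hsub hQ
  have key : ∀ x ∈ C, x.1 ≤ R → q' ≤ x.2 := by
    intro x hx hxR
    rcases eq_or_lt_of_le hxR with h' | h'
    · apply hq'le
      have : x = (R, x.2) := by rw [← h']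
      rwa [this] at hx
    · rcases hch x hx (R, q') hrne with h'' | h''
      · exact absurd h''.1 (by omega)
      · exact h''.2
  have key2 : ∀ x ∈ C, x.1 = R + 1 → x.2 ≤ q' := by
    intro x hx hxR
    rcases hch x hx (R, q') hrne with h'' | h''
    · exact h''.2
    · exact absurd h''.1 (by omega)
  have hbd' : ∀ x ∈ C, x.1 ≤ R + 1 ∧ p ≤ x.1 ∧ q ≤ x.2 ∧ x.2 ≤ nn := by
    intro x hx
    exact ⟨(hbd x hx).1.1, (hbd x hx).2.1, (hbd x hx).1.2, (hbd x hx).2.2⟩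
  have hqq' : q ≤ q' := (hbd _ hrne).1.2
  refine ⟨hqq', ⟨?_, ?_, ?_, ?_, ?_, ?_⟩, ?_⟩
  · intro x hx
    rcases Finset.mem_filter.1 hx with ⟨hxC, hxR⟩
    have := hsub hxC
    exact ⟨this.1, hxR, this.2.2.1, this.2.2.2⟩
  · exact Finset.mem_filter.2 ⟨hP, hp⟩
  · exact Finset.mem_filter.2 ⟨hrne, le_rfl⟩
  · intro x hx
    rcases Finset.mem_filter.1 hx with ⟨hxC, hxR⟩
    exact ⟨⟨hxR, key x hxC hxR⟩, (hbd x hxC).2⟩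
  · intro x hx y hy
    exact hch x (Finset.mem_filter.1 hx).1 y (Finset.mem_filter.1 hy).1
  · intro z hz hQz hzP hcomp
    have hzC : z ∈ C := by
      have hz21 : z.1 ≤ R := hz.2.1
      refine hmax z ⟨hz.1, by omega, hz.2.2.1, hz.2.2.2⟩ ⟨by omega, le_trans hqq' hQz.2⟩ hzP ?_
      intro x hx
      by_cases hxR : x.1 ≤ R
      · exact hcomp x (Finset.mem_filter.2 ⟨hx, hxR⟩)
      · have hx1 : x.1 = R + 1 := by have := (hbd' x hx).1; omega
        exact Or.inl ⟨by omega, le_trans (key2 x hx hx1) hQz.2⟩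
    exact Finset.mem_filter.2 ⟨hzC, hQz.1⟩
  · apply Finset.Subset.antisymm
    · intro x hx
      by_cases hxR : x.1 ≤ R
      · exact Finset.mem_union_left _ (Finset.mem_filter.2 ⟨hx, hxR⟩)
      · refine Finset.mem_union_right _ (mem_hseg.2 ⟨?_, (hbd' x hx).2.2.1, ?_⟩)
        · have := (hbd' x hx).1; omega
        · exact key2 x hx (by have := (hbd' x hx).1; omega)
    · intro x hx
      rcases Finset.mem_union.1 hx with hx | hx
      · exact (Finset.mem_filter.1 hx).1
      · rcases mem_hseg.1 hx with ⟨hx1, hx2, hx3⟩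
        refine hmax x ⟨by omega, by omega, by omega, by omega⟩
          ⟨by omega, hx2⟩ ⟨by omega, by omega⟩ ?_
        intro y hy
        by_cases hyR : y.1 ≤ R
        · exact Or.inr ⟨by omega, le_trans hx3 (key y hy hyR)⟩
        · have hy1 : y.1 = R + 1 := by have := (hbd' y hy).1; omega
          rcases le_total x.2 y.2 with h' | h'
          · exact Or.inr ⟨by omega, h'⟩
          · exact Or.inl ⟨by omega, h'⟩

lemma path_glue {R nn p q q' : ℕ} {C' : Finset (ℕ × ℕ)}
    (h : IsPath (grid R nn) (p, nn) (R, q') C') (hq1 : 1 ≤ q) (hqq : q ≤ q') :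
    IsPath (grid (R+1) nn) (p, nn) (R+1, q) (C' ∪ hseg (R+1) q q') := by
  classical
  obtain ⟨hsub, hP, hQ, hbd, hch, hmax⟩ := h
  have hQg : (1:ℕ) ≤ R ∧ R ≤ R ∧ 1 ≤ q' ∧ q' ≤ nn := hsub hQ
  refine ⟨?_, ?_, ?_, ?_, ?_, ?_⟩
  · intro x hx
    rcases Finset.mem_union.1 hx with hx | hx
    · have hg : (1:ℕ) ≤ x.1 ∧ x.1 ≤ R ∧ 1 ≤ x.2 ∧ x.2 ≤ nn := hsub hx
      exact ⟨hg.1, by omega, hg.2.2.1, hg.2.2.2⟩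
    · rcases mem_hseg.1 hx with ⟨hx1, hx2, hx3⟩
      exact ⟨by omega, by omega, by omega, by omega⟩
  · exact Finset.mem_union_left _ hP
  · exact Finset.mem_union_right _ (mem_hseg.2 ⟨rfl, le_rfl, hqq⟩)
  · intro x hx
    rcases Finset.mem_union.1 hx with hx | hx
    · exact ⟨⟨by have := (hbd x hx).1.1; omega, le_trans hqq (hbd x hx).1.2⟩, (hbd x hx).2⟩
    · rcases mem_hseg.1 hx with ⟨hx1, hx2, hx3⟩
      have hPg : (1:ℕ) ≤ p ∧ p ≤ R ∧ 1 ≤ nn ∧ nn ≤ nn := hsub hP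
      exact ⟨⟨by omega, hx2⟩, ⟨by omega, by omega⟩⟩
  · intro x hx y hy
    rcases Finset.mem_union.1 hx with hx | hx <;> rcases Finset.mem_union.1 hy with hy | hy
    · exact hch x hx y hy
    · rcases mem_hseg.1 hy with ⟨hy1, hy2, hy3⟩
      exact Or.inr ⟨by have := (hbd x hx).1.1; omega, le_trans hy3 (hbd x hx).1.2⟩
    · rcases mem_hseg.1 hx with ⟨hx1, hx2, hx3⟩
      exact Or.inl ⟨by have := (hbd y hy).1.1; omega, le_trans hx3 (hbd y hy).1.2⟩
    · rcases mem_hseg.1 hx with ⟨hx1, hx2, hx3⟩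
      rcases mem_hseg.1 hy with ⟨hy1, hy2, hy3⟩
      rcases le_total x.2 y.2 with h' | h'
      · exact Or.inl ⟨by omega, h'⟩
      · exact Or.inr ⟨by omega, h'⟩
  · intro z hz hQz hzP hcomp
    by_cases hzR : z.1 ≤ R
    · have hq'z : q' ≤ z.2 := by
        rcases hcomp (R+1, q') (Finset.mem_union_right _ (mem_hseg.2 ⟨rfl, hqq, le_rfl⟩))
          with h' | h'
        · exact h'.2
        · exact absurd h'.1 (by omega)
      refine Finset.mem_union_left _
        (hmax z ⟨hz.1, hzR, hz.2.2.1, hz.2.2.2⟩ ⟨hzR, hq'z⟩ hzP ?_)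
      intro x hx
      exact hcomp x (Finset.mem_union_left _ hx)
    · have hz1 : z.1 = R + 1 := by have := hz.2.1; omega
      have hzq' : z.2 ≤ q' := by
        rcases hcomp (R, q') (Finset.mem_union_left _ hQ) with h' | h'
        · exact absurd h'.1 (by omega)
        · exact h'.2
      exact Finset.mem_union_right _ (mem_hseg.2 ⟨hz1, hQz.2, hzq'⟩)

/-! ### counting -/

def gcount : (m : ℕ) → (Fin m → ℕ) → ℕ
  | 0, _ => 1
  | m+1, v => ∑ w ∈ Fintype.piFinset (fun i : Fin m => Finset.Ico (v i.castSucc) (v i.succ)),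
      gcount m w

def tupleSet (R nn : ℕ) (b : Fin R → ℕ) : Set (Fin R → Finset (ℕ × ℕ)) :=
  {C | (∀ i : Fin R, IsPath (grid R nn) ((i : ℕ) + 1, nn) (R, b i) (C i)) ∧
    (∀ i j : Fin R, i ≠ j → Disjoint (C i) (C j))}

lemma tupleSet_finite (R nn : ℕ) (b : Fin R → ℕ) : (tupleSet R nn b).Finite := by
  classical
  apply Set.Finite.subset (Set.Finite.pi (fun i : Fin R =>
    ((Finset.Icc 1 R ×ˢ Finset.Icc 1 nn).powerset : Finset (Finset (ℕ × ℕ))).finite_toSet))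
  intro C hC
  rw [Set.mem_pi]
  intro i _
  rw [Finset.mem_coe, Finset.mem_powerset, Finset.subset_iff]
  intro x hx
  have hg := (hC.1 i).1 hx
  rw [Finset.mem_product, Finset.mem_Icc, Finset.mem_Icc]
  exact ⟨⟨hg.1, hg.2.1⟩, ⟨hg.2.2.1, hg.2.2.2⟩⟩

theorem tupleSet_ncard (nn : ℕ) (hn : 1 ≤ nn) :
    ∀ (R : ℕ) (b : Fin R → ℕ), StrictMono b → (∀ i, 1 ≤ b i) → (∀ i, b i ≤ nn) →
    (tupleSet R nn b).ncard = gcount R b := by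
  intro R
  induction R with
  | zero =>
    intro b _ _ _
    have h1 : tupleSet 0 nn b = Set.univ := by
      apply Set.eq_univ_iff_forall.2
      intro C
      exact ⟨fun i => i.elim0, fun i => i.elim0⟩
    rw [h1, Set.ncard_univ]
    simp [gcount, Nat.card_unique]
  | succ R ih =>
    intro b hb hb1 hbn
    classical
    have hfin := tupleSet_finite (R+1) nn b
    rw [Set.ncard_eq_toFinset_card _ hfin]
    have hmono : ∀ (i j : Fin R), i < j → b i.succ ≤ b j.castSucc := by
      intro i j hij
      apply hb.monotone
      rw [Fin.le_def]
      simp only [Fin.val_succ, Fin.coe_castSucc]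
      exact hij
    -- fiber map
    set f : (Fin (R+1) → Finset (ℕ × ℕ)) → (Fin R → ℕ) :=
      fun C (i : Fin R) => minCol (C i.castSucc) R with hf
    set box : Finset (Fin R → ℕ) :=
      Fintype.piFinset (fun i : Fin R => Finset.Ico (b i.castSucc) (b i.succ)) with hbox
    have hsplit : ∀ C ∈ tupleSet (R+1) nn b, ∀ i : Fin R,
        b i.castSucc ≤ minCol (C i.castSucc) R ∧
        IsPath (grid R nn) ((i : ℕ) + 1, nn) (R, minCol (C i.castSucc) R)
          ((C i.castSucc).filter (fun x => x.1 ≤ R)) ∧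
        C i.castSucc = ((C i.castSucc).filter fun x => x.1 ≤ R) ∪
          hseg (R+1) (b i.castSucc) (minCol (C i.castSucc) R) := by
      intro C hC i
      have hpath := hC.1 i.castSucc
      have hcast : ((i.castSucc : ℕ) + 1 : ℕ) = (i : ℕ) + 1 := by simp
      rw [hcast] at hpath
      exact path_split hpath (by omega)
    have hmem : ∀ C ∈ hfin.toFinset, f C ∈ box := by
      intro C hC'
      have hC := hfin.mem_toFinset.1 hC'
      rw [hbox, Fintype.mem_piFinset]
      intro i
      obtain ⟨hlow, hpath', hunion⟩ := hsplit C hC i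
      rw [Finset.mem_Ico]
      refine ⟨hlow, ?_⟩
      by_contra hcon
      push_neg at hcon
      have hx1 : ((R+1 : ℕ), b i.succ) ∈ C i.castSucc := by
        rw [hunion]
        refine Finset.mem_union_right _ (mem_hseg.2 ⟨rfl, ?_, hcon⟩)
        exact hb.monotone (by rw [Fin.le_def]; simp)
      have hx2 : ((R+1 : ℕ), b i.succ) ∈ C i.succ := (hC.1 i.succ).2.2.1
      have hne : i.castSucc ≠ i.succ := by
        rw [Fin.ne_iff_vne]
        simp
      exact Finset.disjoint_left.1 (hC.2 _ _ hne) hx1 hx2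
    rw [Finset.card_eq_sum_card_fiberwise hmem]
    show _ = gcount (R+1) b
    rw [gcount]
    apply Finset.sum_congr rfl
    intro w hw
    rw [hbox, Fintype.mem_piFinset] at hw
    simp only [Finset.mem_Ico] at hw
    -- hypotheses on w
    have hw1 : ∀ i, 1 ≤ w i := fun i => le_trans (hb1 i.castSucc) (hw i).1
    have hwn : ∀ i, w i ≤ nn := fun i => le_trans (le_of_lt (hw i).2) (hbn i.succ)
    have hwmono : StrictMono w := by
      intro i j hij
      exact lt_of_lt_of_le (hw i).2 (le_trans (hmono i j hij) (hw j).1)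
    rw [← ih w hwmono hw1 hwn]
    have hTfin := tupleSet_finite R nn w
    rw [Set.ncard_eq_toFinset_card _ hTfin]
    -- the bijection
    apply Finset.card_nbij'
      (fun C => fun i : Fin R => (C i.castSucc).filter (fun x => x.1 ≤ R))
      (fun D => fun i : Fin (R+1) =>
        Fin.lastCases (hseg (R+1) (b (Fin.last R)) nn)
          (fun i' => D i' ∪ hseg (R+1) (b i'.castSucc) (w i')) i)
    · -- forward membership
      intro C hC'
      rw [Finset.mem_coe, Finset.mem_filter] at hC'
      obtain ⟨hCmem, hCf⟩ := hC'
      have hC := hfin.mem_toFinset.1 hCmem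
      rw [Finset.mem_coe, Set.Finite.mem_toFinset]
      constructor
      · intro i
        obtain ⟨hlow, hpath', hunion⟩ := hsplit C hC i
        have : minCol (C i.castSucc) R = w i := congrFun hCf i
        rwa [this] at hpath'
      · intro i j hij
        exact Finset.disjoint_filter_filter (hC.2 i.castSucc j.castSucc
          (by rwa [Ne, Fin.castSucc_inj]))
    · -- backward membership
      intro D hD'
      have hD := hTfin.mem_toFinset.1 hD'
      rw [Finset.mem_coe, Finset.mem_filter]
      have hDrows : ∀ (i : Fin R), ∀ x ∈ D i, x.1 ≤ R := fun i x hx => ((hD.1 i).1 hx).2.1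
      have hpaths : ∀ i : Fin (R+1), IsPath (grid (R+1) nn) ((i : ℕ) + 1, nn) (R+1, b i)
          ((fun i : Fin (R+1) =>
            Fin.lastCases (hseg (R+1) (b (Fin.last R)) nn)
              (fun i' => D i' ∪ hseg (R+1) (b i'.castSucc) (w i')) i) i) := by
        intro i
        induction i using Fin.lastCases with
        | last =>
          simp only [Fin.lastCases_last]
          have : ((Fin.last R : ℕ) + 1) = R + 1 := by simp
          rw [this]
          exact hseg_isPath (hb1 _) (hbn _) (by omega) le_rfl
        | cast i' =>
          simp only [Fin.lastCases_castSucc]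
          have hpath := hD.1 i'
          have : ((i'.castSucc : ℕ) + 1 : ℕ) = (i' : ℕ) + 1 := by simp
          rw [this]
          exact path_glue hpath (hb1 _) (hw i').1
      have hseg_sub : ∀ (i' : Fin R) (x : ℕ × ℕ),
          x ∈ hseg (R+1) (b i'.castSucc) (w i') → x.1 = R + 1 ∧ b i'.castSucc ≤ x.2 ∧ x.2 ≤ w i' :=
        fun i' x hx => mem_hseg.1 hx
      refine ⟨hfin.mem_toFinset.2 ⟨hpaths, ?_⟩, ?_⟩
      · -- disjointness
        have haux : ∀ (i' j' : Fin R), i' < j' →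
            Disjoint (D i' ∪ hseg (R+1) (b i'.castSucc) (w i'))
              (D j' ∪ hseg (R+1) (b j'.castSucc) (w j')) := by
          intro i' j' hij
          rw [Finset.disjoint_left]
          intro x hx hx2
          rcases Finset.mem_union.1 hx with hx | hx <;>
            rcases Finset.mem_union.1 hx2 with hy | hy
          · exact Finset.disjoint_left.1 (hD.2 i' j' (ne_of_lt hij)) hx hy
          · have := hDrows i' x hx; have := (hseg_sub j' x hy).1; omega
          · have := hDrows j' x hy; have := (hseg_sub i' x hx).1; omega
          · have h1 := (hseg_sub i' x hx).2.2
            have h2 := (hseg_sub j' x hy).2.1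
            have h3 : w i' < b j'.castSucc := lt_of_lt_of_le (hw i').2 (hmono i' j' hij)
            omega
        intro i j hij
        induction i using Fin.lastCases with
        | last =>
          induction j using Fin.lastCases with
          | last => exact absurd rfl hij
          | cast j' =>
            simp only [Fin.lastCases_last, Fin.lastCases_castSucc]
            rw [Finset.disjoint_right]
            intro x hx hx2
            rcases Finset.mem_union.1 hx with hx | hx
            · have h1 := hDrows j' x hx
              have h2 := (mem_hseg.1 hx2).1
              omega
            · have h1 := (hseg_sub j' x hx).2.2
              have h2 := (mem_hseg.1 hx2).2.1
              have h3 : w j' < b (Fin.last R) := by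
                refine lt_of_lt_of_le (hw j').2 (hb.monotone ?_)
                rw [Fin.le_def]
                simp only [Fin.val_succ, Fin.val_last]
                omega
              omega
        | cast i' =>
          induction j using Fin.lastCases with
          | last =>
            simp only [Fin.lastCases_last, Fin.lastCases_castSucc]
            rw [Finset.disjoint_left]
            intro x hx hx2
            rcases Finset.mem_union.1 hx with hx | hx
            · have h1 := hDrows i' x hx
              have h2 := (mem_hseg.1 hx2).1
              omega
            · have h1 := (hseg_sub i' x hx).2.2
              have h2 := (mem_hseg.1 hx2).2.1
              have h3 : w i' < b (Fin.last R) := by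
                refine lt_of_lt_of_le (hw i').2 (hb.monotone ?_)
                rw [Fin.le_def]
                simp only [Fin.val_succ, Fin.val_last]
                omega
              omega
          | cast j' =>
            simp only [Fin.lastCases_castSucc]
            have hne : i' ≠ j' := by
              intro hc
              exact hij (by rw [hc])
            rcases lt_or_gt_of_ne hne with h' | h'
            · exact haux i' j' h'
            · exact (haux j' i' h').symm
      · -- fiber condition
        funext i
        show minCol (Fin.lastCases _ _ i.castSucc) R = w i
        simp only [Fin.lastCases_castSucc]
        have hset : {j | ((R:ℕ), j) ∈ D i ∪ hseg (R+1) (b i.castSucc) (w i)} =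
            {j | ((R:ℕ), j) ∈ D i} := by
          ext j
          simp only [Set.mem_setOf_eq, Finset.mem_union]
          constructor
          · rintro (h | h)
            · exact h
            · exact absurd (mem_hseg.1 h).1 (by simp)
          · exact fun h => Or.inl h
        show sInf _ = w i
        rw [hset]
        exact minCol_path_end (hD.1 i)
    · -- left inverse
      intro C hC'
      rw [Finset.mem_coe, Finset.mem_filter] at hC'
      obtain ⟨hCmem, hCf⟩ := hC'
      have hC := hfin.mem_toFinset.1 hCmem
      funext i
      induction i using Fin.lastCases with
      | last =>
        simp only [Fin.lastCases_last]
        have hpath := hC.1 (Fin.last R)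
        have : ((Fin.last R : ℕ) + 1) = R + 1 := by simp
        rw [this] at hpath
        exact (isPath_same_row_eq hpath).symm
      | cast i' =>
        simp only [Fin.lastCases_castSucc]
        obtain ⟨hlow, hpath', hunion⟩ := hsplit C hC i'
        have hwi : minCol (C i'.castSucc) R = w i' := congrFun hCf i'
        rw [← hwi]
        exact hunion.symm
    · -- right inverse
      intro D hD'
      have hD := hTfin.mem_toFinset.1 hD'
      funext i
      simp only [Fin.lastCases_castSucc]
      ext x
      simp only [Finset.mem_filter, Finset.mem_union]
      constructor
      · rintro ⟨h | h, hxR⟩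
        · exact h
        · exact absurd (mem_hseg.1 h).1 (by omega)
      · intro hx
        exact ⟨Or.inl hx, ((hD.1 i).1 hx).2.1⟩


lemma hockey (i : ℕ) {a c : ℕ} (h : a ≤ c) :
    ∑ x ∈ Finset.Ico a c, ((x.choose i : ℚ)) = (c.choose (i+1) : ℚ) - (a.choose (i+1) : ℚ) := by
  induction c, h using Nat.le_induction with
  | base => simp
  | succ c hac ih =>
    rw [Finset.sum_Ico_succ_top hac, ih]
    have : (c+1).choose (i+1) = c.choose i + c.choose (i+1) := Nat.choose_succ_succ _ _
    rw [this]
    push_cast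
    ring

lemma vandermonde_nat (a x N : ℕ) (haN : a ≤ N) :
    ∑ k ∈ Finset.range (N+1), a.choose k * x.choose k = (a+x).choose a := by
  have h1 : ∑ k ∈ Finset.range (N+1), a.choose k * x.choose k
      = ∑ k ∈ Finset.range (a+1), a.choose k * x.choose k := by
    symm
    apply Finset.sum_subset
    · intro t ht
      rw [Finset.mem_range] at *
      omega
    · intro t ht hta
      rw [Finset.mem_range] at ht hta
      rw [Nat.choose_eq_zero_of_lt (by omega), zero_mul]
  rw [h1]
  have h2 : ∑ k ∈ Finset.range (a+1), a.choose k * x.choose k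
      = ∑ k ∈ Finset.range (a+1), a.choose (a-k) * x.choose k := by
    apply Finset.sum_congr rfl
    intro k hk
    rw [Finset.mem_range] at hk
    rw [(Nat.choose_symm (by omega : k ≤ a))]
  rw [h2]
  have h3 : ∑ k ∈ Finset.range (a+1), a.choose (a-k) * x.choose k
      = ∑ k ∈ Finset.range (a+1), a.choose k * x.choose (a-k) := by
    rw [← Finset.sum_range_reflect (fun k => a.choose k * x.choose (a - k)) (a+1)]
    apply Finset.sum_congr rfl
    intro k hk
    rw [Finset.mem_range] at hk
    have e1 : a + 1 - 1 - k = a - k := by omega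
    rw [e1]
    have e2 : a - (a - k) = k := by omega
    rw [e2]
  rw [h3, Nat.add_choose_eq]
  rw [Finset.Nat.sum_antidiagonal_eq_sum_range_succ_mk]

lemma detD_eq (m : ℕ) (v : Fin m → ℕ) :
    (Matrix.of fun i j : Fin m => ((v j).choose (i:ℕ) : ℚ)).det * (∏ i : Fin m, (Nat.factorial (i:ℕ) : ℚ)) =
    ∏ i : Fin m, ∏ j ∈ Finset.Ioi i, ((v j : ℚ) - (v i : ℚ)) := by
  have h1 : (Matrix.vandermonde (fun i : Fin m => ((v i : ℚ)))).det =
      (Matrix.of (fun i j : Fin m => ((descPochhammer ℚ (j:ℕ)).eval ((v i : ℚ))))).det :=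
    Matrix.det_eval_matrixOfPolynomials_eq_det_vandermonde _ _
      (fun i => descPochhammer_natDegree (R := ℚ) (i:ℕ))
      (fun i => monic_descPochhammer _ _)
  have h2 : (Matrix.of (fun i j : Fin m => ((descPochhammer ℚ (j:ℕ)).eval ((v i : ℚ))))) =
      (Matrix.of (fun i j : Fin m => ((Nat.factorial (j:ℕ) : ℚ) * ((v i).choose (j:ℕ) : ℚ)))) := by
    ext i j
    simp only [Matrix.of_apply]
    rw [descPochhammer_eval_eq_descFactorial]
    rw_mod_cast [Nat.descFactorial_eq_factorial_mul_choose]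
  have h3 : (Matrix.of (fun i j : Fin m => ((Nat.factorial (j:ℕ) : ℚ) * ((v i).choose (j:ℕ) : ℚ)))).det =
      (∏ j : Fin m, (Nat.factorial (j:ℕ) : ℚ)) *
        (Matrix.of (fun i j : Fin m => ((v i).choose (j:ℕ) : ℚ))).det := by
    exact Matrix.det_mul_row _ _
  have h4 : (Matrix.of (fun i j : Fin m => ((v i).choose (j:ℕ) : ℚ))).det =
      (Matrix.of fun i j : Fin m => ((v j).choose (i:ℕ) : ℚ)).det := by
    rw [← Matrix.det_transpose]
    rfl
  rw [← Matrix.det_vandermonde, h1, h2, h3, h4]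
  ring

lemma detD_succ (m : ℕ) (v : Fin (m+1) → ℕ) :
    (Matrix.of fun i j : Fin (m+1) => ((v j).choose (i:ℕ) : ℚ)).det =
    (Matrix.of fun i j : Fin m =>
      (((v j.succ).choose ((i:ℕ)+1) : ℚ) - ((v j.castSucc).choose ((i:ℕ)+1) : ℚ))).det := by
  classical
  set A : Matrix (Fin (m+1)) (Fin (m+1)) ℚ :=
    Matrix.of fun i j => ((v j).choose (i:ℕ) : ℚ) with hA
  set U : Matrix (Fin (m+1)) (Fin (m+1)) ℚ := Matrix.of fun a b =>
    if a = b then 1 else if (a:ℕ)+1 = (b:ℕ) then -1 else 0 with hUdef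
  have hU : U.det = 1 := by
    have htri : U.BlockTriangular id := by
      intro a b hab
      simp only [hUdef, Matrix.of_apply]
      rw [if_neg, if_neg]
      · have : (b:ℕ) < (a:ℕ) := hab
        omega
      · intro hc
        exact absurd hc.symm (ne_of_lt hab)
    rw [Matrix.det_of_upperTriangular htri]
    simp [hUdef]
  have hAU0 : ∀ i : Fin (m+1), (A * U) i 0 = A i 0 := by
    intro i
    rw [Matrix.mul_apply]
    rw [Finset.sum_eq_single 0]
    · simp [hUdef]
    · intro a _ ha
      have h2 : ¬ ((a:ℕ) + 1 = ((0 : Fin (m+1)):ℕ)) := by simp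
      simp only [hUdef, Matrix.of_apply, if_neg ha, if_neg h2, mul_zero]
    · simp
  have hAUs : ∀ (i : Fin (m+1)) (k : Fin m),
      (A * U) i k.succ = A i k.succ - A i k.castSucc := by
    intro i k
    rw [Matrix.mul_apply]
    have hterm : ∀ a : Fin (m+1), A i a * U a k.succ =
        (if a = k.succ then A i k.succ else 0) + (if a = k.castSucc then -(A i k.castSucc) else 0) := by
      intro a
      by_cases h1 : a = k.succ
      · subst h1
        have h2 : (k.succ : Fin (m+1)) ≠ k.castSucc := by
          rw [Ne, Fin.ext_iff]; simp
        simp [hUdef, h2]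
      · by_cases h2 : a = k.castSucc
        · subst h2
          have h1' : (k.castSucc : Fin (m+1)) ≠ k.succ := by
            rw [Ne, Fin.ext_iff]; simp
          have h3 : ((k.castSucc : Fin (m+1)):ℕ) + 1 = ((k.succ : Fin (m+1)) : ℕ) := by simp
          simp [hUdef, h1', h3]
        · have h3 : ¬ ((a:ℕ) + 1 = ((k.succ : Fin (m+1)) : ℕ)) := by
            intro hc
            apply h2
            rw [Fin.ext_iff]
            simp only [Fin.coe_castSucc]
            simp only [Fin.val_succ] at hc
            omega
          have h4 : ¬((a:ℕ) = (k:ℕ)) := by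
            intro hc
            apply h2
            rw [Fin.ext_iff]
            simpa using hc
          simp [hUdef, h1, h2, h3, h4]
    rw [Finset.sum_congr rfl (fun a _ => hterm a), Finset.sum_add_distrib,
      Finset.sum_ite_eq' Finset.univ, Finset.sum_ite_eq' Finset.univ]
    simp only [Finset.mem_univ, if_pos]
    ring
  have hdet : A.det = (A * U).det := by rw [Matrix.det_mul, hU, mul_one]
  rw [show (Matrix.of fun i j : Fin (m+1) => ((v j).choose (i:ℕ) : ℚ)).det = A.det from rfl, hdet]
  rw [Matrix.det_succ_row_zero]
  rw [Finset.sum_eq_single 0]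
  · rw [hAU0]
    have hA00 : A 0 0 = 1 := by simp [hA]
    rw [hA00]
    have hsub : ((A * U).submatrix Fin.succ (Fin.succAbove 0)) =
        (Matrix.of fun i j : Fin m =>
          (((v j.succ).choose ((i:ℕ)+1) : ℚ) - ((v j.castSucc).choose ((i:ℕ)+1) : ℚ))) := by
      ext i j
      rw [Matrix.submatrix_apply, Fin.zero_succAbove, hAUs]
      simp [hA]
    rw [hsub]
    simp
  · intro j _ hj
    obtain ⟨k, rfl⟩ := Fin.eq_succ_of_ne_zero hj
    rw [hAUs]
    have : A 0 k.succ - A 0 k.castSucc = 0 := by simp [hA]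
    rw [this]
    ring
  · simp


lemma gcount_eq_det : ∀ (m : ℕ) (v : Fin m → ℕ), StrictMono v →
    (gcount m v : ℚ) = (Matrix.of fun i j : Fin m => ((v j).choose (i:ℕ) : ℚ)).det := by
  intro m
  induction m with
  | zero =>
    intro v _
    rw [gcount, Matrix.det_isEmpty]
    norm_num
  | succ m ih =>
    intro v hv
    have hvm : ∀ i : Fin m, v i.castSucc ≤ v i.succ :=
      fun i => le_of_lt (hv (by rw [Fin.lt_def]; simp))
    rw [gcount, detD_succ]
    push_cast
    have hterm : ∀ w ∈ Fintype.piFinset (fun i : Fin m => Finset.Ico (v i.castSucc) (v i.succ)),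
        (gcount m w : ℚ) = Matrix.detRowAlternating
          (fun j : Fin m => (fun i : Fin m => ((w j).choose (i:ℕ) : ℚ))) := by
      intro w hw
      rw [Fintype.mem_piFinset] at hw
      have hwmono : StrictMono w := by
        intro i j hij
        have h1 := (Finset.mem_Ico.1 (hw i)).2
        have h2 := (Finset.mem_Ico.1 (hw j)).1
        have h3 : v i.succ ≤ v j.castSucc := by
          apply hv.monotone
          rw [Fin.le_def]
          rw [Fin.lt_def] at hij
          simp only [Fin.val_succ, Fin.coe_castSucc]
          omega
        omega
      rw [ih w hwmono, ← Matrix.det_transpose]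
      rfl
    rw [Finset.sum_congr rfl hterm]
    have hms := (Matrix.detRowAlternating :
        (Fin m → ℚ) [⋀^Fin m]→ₗ[ℚ] ℚ).toMultilinearMap.map_sum_finset
      (fun (j : Fin m) (x : ℕ) => (fun i : Fin m => ((x.choose (i:ℕ)) : ℚ)))
      (fun i : Fin m => Finset.Ico (v i.castSucc) (v i.succ))
    simp only [AlternatingMap.coe_multilinearMap] at hms
    rw [← hms]
    have hrow : (fun j : Fin m => ∑ x ∈ Finset.Ico (v j.castSucc) (v j.succ),
        (fun i : Fin m => ((x.choose (i:ℕ)) : ℚ))) =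
        (fun j : Fin m => (fun i : Fin m =>
          (((v j.succ).choose ((i:ℕ)+1) : ℚ) - ((v j.castSucc).choose ((i:ℕ)+1) : ℚ)))) := by
      funext j i
      rw [Finset.sum_apply]
      exact hockey (i:ℕ) (hvm j)
    rw [hrow, ← Matrix.det_transpose]
    rfl

/-! ### determinant of the corner matrix -/

lemma sum_rsub (r : ℕ) : ∑ i : Fin r, (r - 1 - (i:ℕ)) = r.choose 2 := by
  rw [Fin.sum_univ_eq_sum_range (fun i => r - 1 - i) r]
  have h1 : ∑ i ∈ Finset.range r, (r - 1 - i) = ∑ i ∈ Finset.range r, i := by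
    exact Finset.sum_range_reflect (fun i => i) r
  rw [h1, Nat.choose_two_right]
  have h2 := Finset.sum_range_id_mul_two r
  omega

lemma detM_eq (r n : ℕ) (hr : 1 ≤ r) (hrn : r ≤ n) (b : Fin r → ℕ) :
    Matrix.det (Matrix.of fun i j : Fin r =>
        ∑ k ∈ Finset.range (n + 1),
          (((r - 1 - (i : ℕ)).choose k * (n - b j).choose k : ℕ) : ℚ) •
            (X : Polynomial ℚ) ^ k) =
    Polynomial.C ((Matrix.of fun k j : Fin r =>
      (((n - b j).choose (r-1-(k:ℕ)) : ℕ) : ℚ)).det) * X ^ r.choose 2 := by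
  classical
  set A : Matrix (Fin r) (Fin r) ℚ[X] := Matrix.of fun i k =>
    (((r - 1 - (i:ℕ)).choose (r - 1 - (k:ℕ)) : ℕ) : ℚ[X]) * X ^ (r - 1 - (k:ℕ)) with hAdef
  set Bq : Matrix (Fin r) (Fin r) ℚ := Matrix.of fun k j =>
    (((n - b j).choose (r-1-(k:ℕ)) : ℕ) : ℚ) with hBqdef
  set B : Matrix (Fin r) (Fin r) ℚ[X] := Bq.map Polynomial.C with hBdef
  have hM : (Matrix.of fun i j : Fin r =>
      ∑ k ∈ Finset.range (n + 1),
        (((r - 1 - (i : ℕ)).choose k * (n - b j).choose k : ℕ) : ℚ) •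
          (X : Polynomial ℚ) ^ k) = A * B := by
    refine Matrix.ext (fun i j => ?_)
    rw [Matrix.mul_apply]
    have hsub : ∑ k ∈ Finset.range (n + 1),
        (((r - 1 - (i : ℕ)).choose k * (n - b j).choose k : ℕ) : ℚ) • (X : Polynomial ℚ) ^ k
        = ∑ k ∈ Finset.range r,
        (((r - 1 - (i : ℕ)).choose k * (n - b j).choose k : ℕ) : ℚ) • (X : Polynomial ℚ) ^ k := by
      symm
      apply Finset.sum_subset
      · intro t ht
        rw [Finset.mem_range] at *
        omega
      · intro t ht hta
        rw [Finset.mem_range] at ht hta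
        rw [Nat.choose_eq_zero_of_lt (by omega : r - 1 - (i:ℕ) < t), zero_mul]
        simp
    rw [Matrix.of_apply, hsub, ← Fin.sum_univ_eq_sum_range (fun k =>
      (((r - 1 - (i : ℕ)).choose k * (n - b j).choose k : ℕ) : ℚ) • (X : Polynomial ℚ) ^ k) r]
    rw [← Function.Bijective.sum_comp (Fin.rev_involutive.bijective) (fun k : Fin r =>
      (((r - 1 - (i : ℕ)).choose (k:ℕ) * (n - b j).choose (k:ℕ) : ℕ) : ℚ) •
        (X : Polynomial ℚ) ^ (k:ℕ))]
    apply Finset.sum_congr rfl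
    intro k _
    have hrev : ((Fin.rev k : Fin r) : ℕ) = r - 1 - (k:ℕ) := by
      rw [Fin.val_rev]
      omega
    rw [hrev]
    rw [hAdef, hBdef, hBqdef]
    simp only [Matrix.of_apply, Matrix.map_apply]
    rw [Polynomial.smul_eq_C_mul]
    push_cast
    rw [Polynomial.C_mul, map_natCast, map_natCast]
    ring
  rw [hM, Matrix.det_mul]
  have hdetA : A.det = X ^ r.choose 2 := by
    have htri : A.BlockTriangular id := by
      intro i k hik
      have h1 : (k:ℕ) < (i:ℕ) := hik
      rw [hAdef]
      simp only [Matrix.of_apply]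
      rw [Nat.choose_eq_zero_of_lt (by omega : r - 1 - (i:ℕ) < r - 1 - (k:ℕ))]
      simp
    rw [Matrix.det_of_upperTriangular htri]
    have hdiag : ∀ i : Fin r, A i i = X ^ (r - 1 - (i:ℕ)) := by
      intro i
      rw [hAdef]
      simp [Nat.choose_self]
    rw [Finset.prod_congr rfl (fun i _ => hdiag i)]
    rw [Finset.prod_pow_eq_pow_sum]
    rw [sum_rsub]
  have hdetB : B.det = Polynomial.C (Bq.det) := by
    rw [hBdef, ← RingHom.mapMatrix_apply, ← RingHom.map_det]
  rw [hdetA, hdetB]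
  ring


lemma prod_reindex (r : ℕ) (b : Fin r → ℕ) :
    (∏ i : Fin r, ∏ j ∈ Finset.Ioi i, ((b (Fin.rev i) : ℚ) - (b (Fin.rev j) : ℚ))) =
    ∏ i : Fin r, ∏ j ∈ Finset.Ioi i, ((b j : ℚ) - (b i : ℚ)) := by
  rw [Finset.prod_sigma', Finset.prod_sigma']
  apply Finset.prod_nbij' (i := fun p => ⟨Fin.rev p.2, Fin.rev p.1⟩)
    (j := fun p => ⟨Fin.rev p.2, Fin.rev p.1⟩)
  · intro a ha
    simp only [Finset.mem_sigma, Finset.mem_univ, Finset.mem_Ioi, true_and] at ha ⊢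
    exact Fin.rev_lt_rev.2 ha
  · intro a ha
    simp only [Finset.mem_sigma, Finset.mem_univ, Finset.mem_Ioi, true_and] at ha ⊢
    exact Fin.rev_lt_rev.2 ha
  · intro a _
    simp [Fin.rev_rev]
  · intro a _
    simp [Fin.rev_rev]
  · intro a _
    simp [Fin.rev_rev]

lemma detBq_eq (r n : ℕ) (b : Fin r → ℕ) (hbn : ∀ i, b i ≤ n) :
    (Matrix.of fun k j : Fin r => (((n - b j).choose (r-1-(k:ℕ)) : ℕ) : ℚ)).det =
    (Matrix.of fun i j : Fin r => ((b j).choose (i:ℕ) : ℚ)).det := by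
  set w : Fin r → ℕ := fun j => n - b (Fin.rev j) with hw
  have h1 : (Matrix.of fun k j : Fin r => (((n - b j).choose (r-1-(k:ℕ)) : ℕ) : ℚ)).det
      = (Matrix.of fun k j : Fin r => (((w j).choose ((k:ℕ)) : ℕ) : ℚ)).det := by
    rw [← Matrix.det_submatrix_equiv_self (Fin.revPerm)
      (Matrix.of fun k j : Fin r => (((n - b j).choose (r-1-(k:ℕ)) : ℕ) : ℚ))]
    congr 1
    refine Matrix.ext (fun k j => ?_)
    simp only [Matrix.submatrix_apply, Matrix.of_apply, Fin.revPerm_apply, hw]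
    have hk : r - 1 - ((Fin.rev k : Fin r):ℕ) = (k:ℕ) := by
      rw [Fin.val_rev]
      omega
    rw [hk]
  rw [h1]
  have hfact : (∏ i : Fin r, (Nat.factorial (i:ℕ) : ℚ)) ≠ 0 := by
    apply Finset.prod_ne_zero_iff.2
    intro i _
    exact_mod_cast Nat.factorial_ne_zero _
  apply mul_right_cancel₀ hfact
  rw [detD_eq r w, detD_eq r b]
  rw [← prod_reindex r b]
  apply Finset.prod_congr rfl
  intro i _
  apply Finset.prod_congr rfl
  intro j _
  have e1 : ((w j : ℕ) : ℚ) = (n : ℚ) - (b (Fin.rev j) : ℚ) := by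
    rw [hw]
    push_cast [Nat.cast_sub (hbn _)]
    ring
  have e2 : ((w i : ℕ) : ℚ) = (n : ℚ) - (b (Fin.rev i) : ℚ) := by
    rw [hw]
    push_cast [Nat.cast_sub (hbn _)]
    ring
  rw [e1, e2]
  ring

lemma eval_entry (a x n : ℕ) (han : a ≤ n) :
    Polynomial.eval (1:ℚ) (∑ k ∈ Finset.range (n+1),
      ((a.choose k * x.choose k : ℕ) : ℚ) • (X : ℚ[X])^k) = ((a+x).choose a : ℚ) := by
  rw [Polynomial.eval_finset_sum]
  simp only [Polynomial.eval_smul, Polynomial.eval_pow, Polynomial.eval_X, one_pow,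
    smul_eq_mul, mul_one]
  rw [← Nat.cast_sum]
  rw [vandermonde_nat a x n han]


/-- Lemma 2.1 together with Lindström–Gessel–Viennot: with
`M_{i,j} = ∑_k C(r-i,k) C(n-b_j,k) tᵏ`, evaluating `det M` at `t = 1` gives the
determinant of the path-count matrix `N_{i,j} = C((r-i)+(n-b_j), r-i)`; moreover
`det M = w · t^{C(r,2)}` where `w` is the number of `r`-tuples of non-intersecting paths
from `Pᵢ = (i,n)` to `Qᵢ = (r, bᵢ)` in the `r × n` grid. -/
theorem det_corner_matrix_eval_one (r n : ℕ) (hr : 1 ≤ r) (hn : 1 ≤ n)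
    (b : Fin r → ℕ) (hb : StrictMono b) (hb1 : ∀ i, 1 ≤ b i) (hbn : ∀ i, b i ≤ n) :
    Polynomial.eval (1 : ℚ)
        (Matrix.det (Matrix.of fun i j : Fin r =>
          ∑ k ∈ Finset.range (n + 1),
            (((r - 1 - (i : ℕ)).choose k * (n - b j).choose k : ℕ) : ℚ) •
              (X : Polynomial ℚ) ^ k)) =
      Matrix.det (Matrix.of fun i j : Fin r =>
        ((((r - 1 - (i : ℕ)) + (n - b j)).choose (r - 1 - (i : ℕ)) : ℕ) : ℚ)) ∧
    Matrix.det (Matrix.of fun i j : Fin r =>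
        ∑ k ∈ Finset.range (n + 1),
          (((r - 1 - (i : ℕ)).choose k * (n - b j).choose k : ℕ) : ℚ) •
            (X : Polynomial ℚ) ^ k) =
      (tupleCountAll (grid r n) (fun i : Fin r => ((i : ℕ) + 1, n))
          (fun i : Fin r => (r, b i)) : Polynomial ℚ) * X ^ r.choose 2 := by
  classical
  have key : ∀ m : ℕ, ∀ hm : m < r, m + 1 ≤ b ⟨m, hm⟩ := by
    intro m
    induction m with
    | zero => intro hm; exact hb1 _
    | succ m ihm =>
      intro hm
      have h1 := ihm (by omega)
      have h2 : b ⟨m, by omega⟩ < b ⟨m+1, hm⟩ := hb (by rw [Fin.lt_def]; simp)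
      omega
  have hrn : r ≤ n := by
    have h1 := key (r-1) (by omega)
    have h2 := hbn ⟨r-1, by omega⟩
    omega
  have hM2 : Matrix.det (Matrix.of fun i j : Fin r =>
        ∑ k ∈ Finset.range (n + 1),
          (((r - 1 - (i : ℕ)).choose k * (n - b j).choose k : ℕ) : ℚ) •
            (X : Polynomial ℚ) ^ k) =
      (tupleCountAll (grid r n) (fun i : Fin r => ((i : ℕ) + 1, n))
          (fun i : Fin r => (r, b i)) : Polynomial ℚ) * X ^ r.choose 2 := by
    rw [detM_eq r n hr hrn b]
    have hx : (Matrix.of fun k j : Fin r => (((n - b j).choose (r-1-(k:ℕ)) : ℕ) : ℚ)).det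
        = ((tupleCountAll (grid r n) (fun i : Fin r => ((i : ℕ) + 1, n))
            (fun i : Fin r => (r, b i)) : ℕ) : ℚ) := by
      rw [detBq_eq r n b hbn, ← gcount_eq_det r b hb]
      norm_cast
      rw [← tupleSet_ncard n hn r b hb hb1 hbn]
      rfl
    rw [hx, map_natCast]
  constructor
  · have h1 : Polynomial.eval (1:ℚ) ((Matrix.of fun i j : Fin r =>
        ∑ k ∈ Finset.range (n + 1),
          (((r - 1 - (i : ℕ)).choose k * (n - b j).choose k : ℕ) : ℚ) •
            (X : Polynomial ℚ) ^ k).det) =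
        (((Polynomial.evalRingHom (1:ℚ))).mapMatrix (Matrix.of fun i j : Fin r =>
        ∑ k ∈ Finset.range (n + 1),
          (((r - 1 - (i : ℕ)).choose k * (n - b j).choose k : ℕ) : ℚ) •
            (X : Polynomial ℚ) ^ k)).det := by
      rw [← RingHom.map_det]
      rfl
    rw [h1]
    congr 1
    refine Matrix.ext (fun i j => ?_)
    simp only [RingHom.mapMatrix_apply, Matrix.map_apply, Matrix.of_apply,
      Polynomial.coe_evalRingHom]
    exact eval_entry _ _ _ (by omega)
  · exact hM2
end

section
/- Let (b_1, b_2) and (c_1, c_2) be pairs of positive integers with b_1 < b_2 and c_1 < c_2. Define A(b_1,b_2;c_1,c_2) = 1 if b_2 = c_2 and b_1 ≤ c_1, and 0 otherwise. Define B_2(b_1,b_2;c_1,c_2) = ∑_{(d_1,d_2) ∈ S_2} A(b_1,b_2;d_1,d_2) [c_1 c_2; d_1 d_2] (1-t)^{(d_1-b_1)+(d_2-b_2)}. Then: if b_1 ≤ c_1 ≤ b_2 - 1, B_2(b_1,b_2;c_1,c_2) = [c_2, b_2]; and if c_1 < b_1 or c_1 ≥ b_2, then B_2(b_1,b_2;c_1,c_2)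 = 0. -/
open Polynomial Finset

/-- The recursively defined coefficient `A(b; c)`:  for `l = 2`, `A = 1` iff `b₂ = c₂` and
`b₁ ≤ c₁`; for `l > 2`, `A(b;c) = 0` if the last entries differ, and otherwise it is the sum
of `A` on the truncations over all strictly increasing `(l-1)`-tuples `c'` of positive
integers with `c' ≤ (c₁, …, c_{l-1})` componentwise. -/
def Acoef : (l : ℕ) → (Fin l → ℕ) → (Fin l → ℕ) → ℕ
  | 0, _, _ => 0
  | 1, _, _ => 0
  | 2, b, c => if b 1 = c 1 ∧ b 0 ≤ c 0 then 1 else 0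
  | l + 3, b, c =>
    if b (Fin.last (l + 2)) = c (Fin.last (l + 2)) then
      ∑ c' ∈ (Finset.Icc (fun _ => 1) (fun j : Fin (l + 2) => c j.castSucc)).filter
          (fun c' => ∀ i j : Fin (l + 2), i < j → c' i < c' j),
        Acoef (l + 2) (fun j => b j.castSucc) c'
    else 0

/-- Finite index set covering all pairs `(d₁,d₂) ∈ S₂` giving nonzero terms. -/
def S2box (b2 c2 : ℕ) : Finset (ℕ × ℕ) :=
  ((Finset.range (b2 + c2 + 2)) ×ˢ (Finset.range (b2 + c2 + 2))).filter
    (fun d => 1 ≤ d.1 ∧ d.1 < d.2)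

lemma Acoef2' (b1 b2 d1 d2 : ℕ) :
    Acoef 2 ![b1, b2] ![d1, d2] = if b2 = d2 ∧ b1 ≤ d1 then 1 else 0 := by
  simp [Acoef]

lemma brkT2' (c1 c2 d1 d2 : ℕ) :
    brkT ![c1, c2] ![d1, d2] = if c1 < d2 then brk c1 d1 * brk c2 d2 else 0 := by
  unfold brkT
  have h : (∀ i : Fin 2, ∀ h : (i : ℕ) + 1 < 2, ![c1,c2] i < ![d1,d2] ⟨(i:ℕ)+1,h⟩) ↔ c1 < d2 := by
    constructor
    · intro h; simpa using h 0 (by norm_num)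
    · intro h i hi
      have h0 : i = 0 := Fin.ext (by omega)
      subst h0; simpa using h
  rw [if_congr h rfl rfl]
  simp [Fin.prod_univ_two]

lemma tele' (n : ℕ) :
    (∑ i ∈ Finset.range n, X * (1 - X) ^ i) + (1 - X) ^ n = (1 : Polynomial ℚ) := by
  induction n with
  | zero => simp
  | succ n ih => rw [Finset.sum_range_succ]; linear_combination ih

lemma mem_S2box (b2 c2 : ℕ) (d : ℕ × ℕ) :
    d ∈ S2box b2 c2 ↔ d.1 < b2 + c2 + 2 ∧ d.2 < b2 + c2 + 2 ∧ 1 ≤ d.1 ∧ d.1 < d.2 := by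
  simp [S2box, Finset.mem_filter, Finset.mem_product, and_assoc]

lemma B2_reduce (b1 b2 c1 c2 : ℕ) (hb1 : 1 ≤ b1) (hb : b1 < b2) (hc2 : 1 ≤ c2) :
    (∑ d ∈ S2box b2 c2,
        (Acoef 2 ![b1, b2] ![d.1, d.2] : Polynomial ℚ) * brkT ![c1, c2] ![d.1, d.2] *
          (1 - X) ^ ((d.1 - b1) + (d.2 - b2))) =
    ∑ d1 ∈ Finset.Ico b1 b2,
        brkT ![c1, c2] ![d1, b2] * (1 - X) ^ (d1 - b1) := by
  have hsub : (Finset.Ico b1 b2).image (fun d1 => (d1, b2)) ⊆ S2box b2 c2 := by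
    intro d hd
    simp only [Finset.mem_image, Finset.mem_Ico] at hd
    obtain ⟨d1, ⟨h1, h2⟩, rfl⟩ := hd
    rw [mem_S2box]
    refine ⟨by omega, by omega, by omega, by omega⟩
  rw [← Finset.sum_subset hsub]
  · rw [Finset.sum_image (by intro x _ y _ h; exact (Prod.mk.injEq _ _ _ _ ▸ h).1)]
    apply Finset.sum_congr rfl
    intro d1 hd1
    simp only [Finset.mem_Ico] at hd1
    rw [Acoef2']
    rw [if_pos ⟨rfl, hd1.1⟩]
    simp
  · intro d hd hnd
    rw [mem_S2box] at hd
    rw [Acoef2']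
    have : ¬ (b2 = d.2 ∧ b1 ≤ d.1) := by
      intro ⟨h1, h2⟩
      apply hnd
      simp only [Finset.mem_image, Finset.mem_Ico]
      exact ⟨d.1, ⟨h2, h1 ▸ hd.2.2.2⟩, by rw [h1]⟩
    rw [if_neg this]
    simp

/-- Lemma 3.5 for `B₂`: with
`B₂(b₁,b₂;c₁,c₂) = ∑_{(d₁,d₂)∈S₂} A(b₁,b₂;d₁,d₂) [c₁ c₂; d₁ d₂] (1-t)^{(d₁-b₁)+(d₂-b₂)}`
(all terms outside the finite box `S2box` vanish), one has `B₂ = [c₂,b₂]` if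
`b₁ ≤ c₁ ≤ b₂ - 1`, and `B₂ = 0` if `c₁ < b₁` or `c₁ ≥ b₂`. -/
theorem B2_pair (b1 b2 c1 c2 : ℕ) (hb1 : 1 ≤ b1) (hb : b1 < b2)
    (hc1 : 1 ≤ c1) (hc : c1 < c2) :
    ((b1 ≤ c1 → c1 ≤ b2 - 1 →
      (∑ d ∈ S2box b2 c2,
          (Acoef 2 ![b1, b2] ![d.1, d.2] : Polynomial ℚ) * brkT ![c1, c2] ![d.1, d.2] *
            (1 - X) ^ ((d.1 - b1) + (d.2 - b2))) = brk c2 b2) ∧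
    (c1 < b1 ∨ b2 ≤ c1 →
      (∑ d ∈ S2box b2 c2,
          (Acoef 2 ![b1, b2] ![d.1, d.2] : Polynomial ℚ) * brkT ![c1, c2] ![d.1, d.2] *
            (1 - X) ^ ((d.1 - b1) + (d.2 - b2))) = 0)) := by
  rw [B2_reduce b1 b2 c1 c2 hb1 hb (by omega)]
  constructor
  · -- main case : b1 ≤ c1 ≤ b2 - 1
    intro h1 h2
    have hc1b2 : c1 < b2 := by omega
    have step : ∀ d1 ∈ Finset.Ico b1 b2,
        brkT ![c1, c2] ![d1, b2] * (1 - X) ^ (d1 - b1) =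
        brk c1 d1 * brk c2 b2 * (1 - X) ^ (d1 - b1) := by
      intro d1 _
      rw [brkT2', if_pos hc1b2]
    rw [Finset.sum_congr rfl step]
    have hsplit : Finset.Ico b1 b2 = Finset.Ico b1 (c1 + 1) ∪ Finset.Ico (c1 + 1) b2 := by
      rw [Finset.Ico_union_Ico_eq_Ico (by omega) (by omega)]
    rw [hsplit, Finset.sum_union (by
      apply Finset.Ico_disjoint_Ico_consecutive)]
    have hzero : ∑ d1 ∈ Finset.Ico (c1 + 1) b2,
        brk c1 d1 * brk c2 b2 * (1 - X) ^ (d1 - b1) = 0 := by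
      apply Finset.sum_eq_zero
      intro d1 hd1
      simp only [Finset.mem_Ico] at hd1
      have : brk c1 d1 = 0 := by
        unfold brk
        rw [if_neg (by omega), if_neg (by omega)]
      rw [this]; ring
    rw [hzero, add_zero]
    have h3 : Finset.Ico b1 (c1 + 1) = Finset.Ico b1 c1 ∪ {c1} := by
      ext x; simp only [Finset.mem_Ico, Finset.mem_union, Finset.mem_singleton]; omega
    rw [h3, Finset.sum_union (by
      simp [Finset.disjoint_singleton_right])]
    have h4 : ∑ d1 ∈ Finset.Ico b1 c1, brk c1 d1 * brk c2 b2 * (1 - X) ^ (d1 - b1)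
        = ∑ i ∈ Finset.range (c1 - b1), X * (1 - X) ^ i * brk c2 b2 := by
      rw [Finset.sum_Ico_eq_sum_range]
      apply Finset.sum_congr rfl
      intro i hi
      simp only [Finset.mem_range] at hi
      have hbrk : brk c1 (b1 + i) = X := by
        unfold brk
        rw [if_pos (by omega)]
      rw [hbrk]
      rw [Nat.add_sub_cancel_left]
      ring
    rw [h4]
    have h5 : ∑ d1 ∈ ({c1} : Finset ℕ), brk c1 d1 * brk c2 b2 * (1 - X) ^ (d1 - b1)
        = (1 - X) ^ (c1 - b1) * brk c2 b2 := by
      rw [Finset.sum_singleton]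
      have : brk c1 c1 = 1 := by unfold brk; rw [if_neg (by omega), if_pos rfl]
      rw [this]; ring
    rw [h5]
    calc (∑ i ∈ Finset.range (c1 - b1), X * (1 - X) ^ i * brk c2 b2)
          + (1 - X) ^ (c1 - b1) * brk c2 b2
        = ((∑ i ∈ Finset.range (c1 - b1), X * (1 - X) ^ i) + (1 - X) ^ (c1 - b1)) * brk c2 b2 := by
          rw [← Finset.sum_mul, ← add_mul]
      _ = brk c2 b2 := by rw [tele', one_mul]
  · -- zero case
    intro hor
    apply Finset.sum_eq_zero
    intro d1 hd1
    simp only [Finset.mem_Ico] at hd1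
    rcases hor with h | h
    · rw [brkT2']
      by_cases hcb : c1 < b2
      · rw [if_pos hcb]
        have : brk c1 d1 = 0 := by
          unfold brk; rw [if_neg (by omega), if_neg (by omega)]
        rw [this]; ring
      · rw [if_neg hcb]; ring
    · rw [brkT2', if_neg (by omega)]; ring
end

section
/- Let l ≥ 3, b, c ∈ S_l with b_l = c_l, and let b' > max(b_{l-1}, c_{l-1}). Then B_3(b_1,…,b_l; c_1,…,c_l) = B_3(b_1,…,b_{l-1}, b'; c_1,…,c_{l-1}, b'), i.e., B_3 does not depend on the common last entry as long as it exceeds max(b_{l-1}, c_{l-1}). -/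
open Polynomial Finset

/-- `B₃(b;c) = ∑_{d₁=b₁}^{b₂-1} ⋯ ∑_{d_{l-1}=b_{l-1}}^{b_l-1}
A(d₁,…,d_{l-1}; c₁,…,c_{l-1}) (1-t)^{∑_{i=1}^{l-1}(cᵢ-dᵢ)}`, for `l = m + 3`. -/
noncomputable def B3fn (m : ℕ) (b c : Fin (m + 3) → ℕ) : Polynomial ℚ :=
  ∑ d ∈ Finset.Icc (fun j : Fin (m + 2) => b j.castSucc)
      (fun j : Fin (m + 2) => b j.succ - 1),
    (Acoef (m + 2) d (fun j => c j.castSucc) : Polynomial ℚ) *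
      (1 - X) ^ (∑ j, (c j.castSucc - d j))

/-
`A(d; e)` vanishes unless `d` and `e` share their last entry, so in the sum defining `B₃(b; c)`
only the tuples `d` with `d_{l-1} = c_{l-1}` contribute. The upper limit `b_l - 1` of the last
summation index is therefore irrelevant as long as it is at least `c_{l-1}`, which holds both
for `b_l = c_l > c_{l-1}` and for any `b' > c_{l-1}`.
-/

lemma Acoef_eq_zero_of_last_ne {l : ℕ} (d e : Fin (l + 2) → ℕ)
    (h : d (Fin.last (l + 1)) ≠ e (Fin.last (l + 1))) : Acoef (l + 2) d e = 0 := by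
  cases l with
  | zero => exact if_neg fun h' => h h'.1
  | succ k => exact if_neg h

section BoxSum

variable {ι M : Type*} [Fintype ι] [DecidableEq ι] [AddCommMonoid M]

lemma sum_Icc_eq_sum_Icc_update_of_vanish (f : (ι → ℕ) → M) (i : ι) (v : ℕ)
    (hf : ∀ d, d i ≠ v → f d = 0) (lo up : ι → ℕ) (hv : v ≤ up i) :
    ∑ d ∈ Icc lo up, f d = ∑ d ∈ Icc lo (Function.update up i v), f d := by
  have hsub : Icc lo (Function.update up i v) ⊆ Icc lo up :=
    Icc_subset_Icc_right fun j => by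
      rcases eq_or_ne j i with rfl | hj
      · simpa using hv
      · simp [Function.update_of_ne hj]
  refine (sum_subset hsub fun d hd hd' => hf d fun hdi => hd' ?_).symm
  rw [mem_Icc] at hd ⊢
  refine ⟨hd.1, fun j => ?_⟩
  rcases eq_or_ne j i with rfl | hj
  · simp [hdi]
  · simpa [Function.update_of_ne hj] using hd.2 j

lemma sum_Icc_update_eq_of_vanish (f : (ι → ℕ) → M) (i : ι) (v : ℕ)
    (hf : ∀ d, d i ≠ v → f d = 0) (lo up : ι → ℕ) (w : ℕ) (hv : v ≤ up i) (hw : v ≤ w) :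
    ∑ d ∈ Icc lo (Function.update up i w), f d = ∑ d ∈ Icc lo up, f d := by
  rw [sum_Icc_eq_sum_Icc_update_of_vanish f i v hf _ _ (by simpa using hw),
    Function.update_idem, ← sum_Icc_eq_sum_Icc_update_of_vanish f i v hf _ _ hv]

end BoxSum

lemma update_last_castSucc {n : ℕ} {α : Type*} (f : Fin (n + 1) → α) (a : α) (j : Fin n) :
    Function.update f (Fin.last n) a j.castSucc = f j.castSucc :=
  Function.update_of_ne (Fin.castSucc_lt_last j).ne _ _

lemma update_last_comp_succ {n : ℕ} {α : Type*} (f : Fin (n + 2) → α) (a : α) (g : α → α) :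
    (fun j : Fin (n + 1) => g (Function.update f (Fin.last (n + 1)) a j.succ)) =
      Function.update (fun j => g (f j.succ)) (Fin.last n) (g a) := by
  funext j
  rcases eq_or_ne j (Fin.last n) with rfl | hj
  · simp
  · rw [Function.update_of_ne hj, Function.update_of_ne (by
      rw [← Fin.succ_last]; exact fun h => hj (Fin.succ_injective _ h))]

/-- Remark 3.2(ii): `B₃` does not depend on the common last entry of `b` and `c`, as long
as it exceeds `max(b_{l-1}, c_{l-1})` (here `l = m + 3`). -/
theorem B3_last_entry_invariant (m : ℕ) (b c : Fin (m + 3) → ℕ)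
    (hc : StrictMono c)
    (hlast : b (Fin.last (m + 2)) = c (Fin.last (m + 2)))
    (b' : ℕ) (hb' : max (b ⟨m + 1, by omega⟩) (c ⟨m + 1, by omega⟩) < b') :
    B3fn m b c =
      B3fn m (Function.update b (Fin.last (m + 2)) b')
        (Function.update c (Fin.last (m + 2)) b') := by
  unfold B3fn
  simp only [update_last_castSucc]
  rw [update_last_comp_succ b b' (· - 1)]
  have hc_lt : c (Fin.last (m + 1)).castSucc < c (Fin.last (m + 2)) :=
    hc (Fin.castSucc_lt_last _)
  have hb_last : b (Fin.last (m + 1)).succ = c (Fin.last (m + 2)) := by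
    rw [Fin.succ_last, hlast]
  have hc_lt' : c (Fin.last (m + 1)).castSucc < b' := lt_of_le_of_lt (le_max_right _ _) hb'
  exact (sum_Icc_update_eq_of_vanish
    (fun d => (Acoef (m + 2) d (fun j => c j.castSucc) : ℚ[X]) *
      (1 - X) ^ (∑ j, (c j.castSucc - d j)))
    (Fin.last (m + 1)) (c (Fin.last (m + 1)).castSucc)
    (fun d hd => by rw [Acoef_eq_zero_of_last_ne _ _ hd, Nat.cast_zero, zero_mul]) _ _ _
    (by rw [hb_last]; omega) (by omega)).symm
end

section
/- Determinant transfer identity: with notation as in the paper, W̃(n,m; b_1,…,b_r) = ∑_{d ∈ S_r, (m,d_r) ∈ Y} {d; b} · W̃(n, m-1; d_1,…,d_r), where W̃(n,m'; c_1,…,c_r) = det[W(P_i, S_j)]_{i,j} with P_i = (i,n), S_j = (m', c_j), W the single-path corner-counting polynomial in Y, and {d;b} = ∑_{σ} sign(σ) ∏_i [σ(d_i), b_i] the antisymmetrized bracket. -/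
open Polynomial Finset

/-- Antisymmetrized tuple bracket `{d; b} = ∑_σ sign(σ) ∏ᵢ [d_{σ(i)}, bᵢ]`. -/
noncomputable def braceT {l : ℕ} (c b : Fin l → ℕ) : Polynomial ℚ :=
  ∑ σ : Equiv.Perm (Fin l), (Equiv.Perm.sign σ : ℤ) • ∏ i, brk (c (σ i)) (b i)

/-- vertical segment in column `m` from height `b` to height `d` -/
def vseg (m b d : ℕ) : Finset (ℕ × ℕ) := (Finset.Icc b d).image (fun j => (m, j))

lemma vseg_mem {m b d : ℕ} {x : ℕ × ℕ} : x ∈ vseg m b d ↔ x.1 = m ∧ b ≤ x.2 ∧ x.2 ≤ d := by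
  simp only [vseg, Finset.mem_image, Finset.mem_Icc, Prod.ext_iff]
  constructor
  · rintro ⟨j, ⟨h1, h2⟩, h3, h4⟩; omega
  · rintro ⟨h1, h2, h3⟩; exact ⟨x.2, ⟨h2, h3⟩, h1.symm, rfl⟩

/-- paths are contained in the bounding box -/
lemma path_sub_box {m n : ℕ} {h : ℕ → ℕ} {P Q : ℕ × ℕ} {C : Finset (ℕ × ℕ)}
    (hC : IsPath (ladder m n h) P Q C) : C ⊆ Finset.Icc ((1:ℕ),(1:ℕ)) (m,n) := by
  intro x hx
  have := hC.1 hx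
  simp only [ladder, Set.mem_setOf_eq] at this
  simp only [Finset.mem_Icc, Prod.mk_le_mk]
  exact ⟨⟨this.1, this.2.2.1⟩, this.2.1, this.2.2.2.1⟩

lemma finite_paths {m n : ℕ} {h : ℕ → ℕ} {P Q : ℕ × ℕ} (Φ : Finset (ℕ × ℕ) → Prop) :
    {C : Finset (ℕ × ℕ) | IsPath (ladder m n h) P Q C ∧ Φ C}.Finite := by
  apply Set.Finite.subset (Finset.finite_toSet ((Finset.Icc ((1:ℕ),(1:ℕ)) (m,n)).powerset))
  intro C hC
  simp only [Finset.coe_powerset, Set.mem_preimage, Set.mem_powerset_iff, Finset.coe_subset,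
    Finset.mem_coe, Finset.mem_powerset]
  exact path_sub_box hC.1

/-- corners have distinct second coordinates in `[1,n]`, so at most `n` corners -/
lemma corners_le {m n : ℕ} {h : ℕ → ℕ} {P Q : ℕ × ℕ} {C : Finset (ℕ × ℕ)}
    (hC : IsPath (ladder m n h) P Q C) : cornersCount C ≤ n := by
  have hbox : ∀ x ∈ C, 1 ≤ x.1 ∧ x.1 ≤ m ∧ 1 ≤ x.2 ∧ x.2 ≤ n := by
    intro x hx
    have := hC.1 hx
    simpa [ladder] using ⟨this.1, this.2.1, this.2.2.1, this.2.2.2.1⟩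
  rw [cornersCount]
  have := Finset.card_le_card_of_injOn (f := Prod.snd)
    (s := C.filter (fun p => (p.1 - 1, p.2) ∈ C ∧ (p.1, p.2 - 1) ∈ C))
    (t := Finset.Icc 1 n) ?_ ?_
  · simpa using this
  · intro p hp
    rw [Finset.mem_coe, Finset.mem_filter] at hp
    have := hbox p hp.1
    simp only [Finset.mem_coe, Finset.mem_Icc]
    omega
  · intro p hp p' hp' hpp
    simp only [Finset.coe_filter, Set.mem_setOf_eq] at hp hp'
    have h1 : 1 ≤ p.2 := (hbox p hp.1).2.2.1
    -- second coords equal; show first coords equal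
    rcases lt_trichotomy p.1 p'.1 with hlt | he | hlt
    · exfalso
      have hx : (p.1, p.2 - 1) ∈ C := hp.2.2
      have hy : p' ∈ C := hp'.1
      rcases hC.2.2.2.2.1 _ hx _ hy with ⟨ha, hb⟩ | ⟨ha, hb⟩
      · simp at ha; omega
      · simp at ha hb; omega
    · exact Prod.ext he hpp
    · exfalso
      have hx : (p'.1, p'.2 - 1) ∈ C := hp'.2.2
      have hy : p ∈ C := hp.1
      rcases hC.2.2.2.2.1 _ hx _ hy with ⟨ha, hb⟩ | ⟨ha, hb⟩
      · simp at ha; omega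
      · simp at ha hb; omega

lemma ladder_mem {m n : ℕ} {h : ℕ → ℕ} {x : ℕ × ℕ} :
    x ∈ ladder m n h ↔ 1 ≤ x.1 ∧ x.1 ≤ m ∧ 1 ≤ x.2 ∧ x.2 ≤ n ∧ x.2 ≤ h x.1 := Iff.rfl

lemma fwd {m n : ℕ} {h : ℕ → ℕ} (hanti : Antitone h) (h1 : h 1 = n) {p q b d : ℕ}
    (hp1 : 1 ≤ p) (hpm : p < m) (hb1 : 1 ≤ b) (hbd : b ≤ d) (hdm : d ≤ h m)
    {C' : Finset (ℕ × ℕ)} (hC' : IsPath (ladder m n h) (p,q) (m-1,d) C') :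
    IsPath (ladder m n h) (p,q) (m,b) (C' ∪ vseg m b d) := by
  obtain ⟨hsub, hP, hQ, hbdd, hchain, hmax⟩ := hC'
  have hdn : d ≤ n := h1 ▸ le_trans hdm (hanti (by omega))
  have hdq : d ≤ q := (hbdd _ hP).1.2
  have hbdd' : ∀ x ∈ C', (x.1 ≤ m - 1 ∧ d ≤ x.2) ∧ (p ≤ x.1 ∧ x.2 ≤ q) := by
    intro x hx
    have := hbdd x hx
    exact ⟨⟨this.1.1, this.1.2⟩, ⟨this.2.1, this.2.2⟩⟩
  refine ⟨?_, ?_, ?_, ?_, ?_, ?_⟩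
  · intro x hx
    rcases Finset.mem_union.1 hx with hx | hx
    · exact hsub hx
    · rw [vseg_mem] at hx
      rw [ladder_mem, hx.1]
      omega
  · exact Finset.mem_union_left _ hP
  · exact Finset.mem_union_right _ (vseg_mem.2 ⟨rfl, le_rfl, hbd⟩)
  · intro x hx
    rcases Finset.mem_union.1 hx with hx | hx
    · have := hbdd' x hx
      exact ⟨⟨by omega, by omega⟩, ⟨by omega, by omega⟩⟩
    · rw [vseg_mem] at hx
      exact ⟨⟨by omega, by omega⟩, ⟨by omega, by omega⟩⟩
  · intro x hx y hy
    rcases Finset.mem_union.1 hx with hx | hx <;> rcases Finset.mem_union.1 hy with hy | hy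
    · exact hchain x hx y hy
    · rw [vseg_mem] at hy
      obtain ⟨hy1, hy2, hy3⟩ := hy
      have := hbdd' x hx
      right; exact ⟨by omega, by omega⟩
    · rw [vseg_mem] at hx
      obtain ⟨hx1, hx2, hx3⟩ := hx
      have := hbdd' y hy
      left; exact ⟨by omega, by omega⟩
    · rw [vseg_mem] at hx hy
      rcases le_total x.2 y.2 with hle | hle
      · left; exact ⟨by omega, hle⟩
      · right; exact ⟨by omega, hle⟩
  · intro z hz hQz hzP hcomp
    rw [ladder_mem] at hz
    by_cases hz1 : z.1 = m
    · -- z lies on column m within the segment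
      rcases hcomp (m-1,d) (Finset.mem_union_left _ hQ) with ⟨ha, hb'⟩ | ⟨ha, hb'⟩
      · -- ple (m-1,d) z : z.1 ≤ m-1, contradiction
        simp only at ha; omega
      · -- ple z (m-1,d) : z.2 ≤ d
        simp only at ha hb'
        refine Finset.mem_union_right _ (vseg_mem.2 ⟨hz1, hQz.2, hb'⟩)
    · -- z is left of column m
      have hzm : z.1 ≤ m - 1 := by have := hQz.1; omega
      have hdz : d ≤ z.2 := by
        rcases hcomp (m,d) (Finset.mem_union_right _ (vseg_mem.2 ⟨rfl, hbd, le_rfl⟩))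
          with ⟨ha, hb'⟩ | ⟨ha, hb'⟩
        · exact hb'
        · simp only at ha; omega
      refine Finset.mem_union_left _ (hmax z hz ⟨hzm, hdz⟩ hzP ?_)
      intro x hx
      exact hcomp x (Finset.mem_union_left _ hx)

lemma corners_union {m b d : ℕ} (hm : 1 ≤ m) (hb1 : 1 ≤ b) (hbd : b ≤ d)
    {C' : Finset (ℕ × ℕ)} (hQ' : (m-1,d) ∈ C')
    (hlt : ∀ x ∈ C', x.1 < m) (hge : ∀ x ∈ C', d ≤ x.2) :
    cornersCount (C' ∪ vseg m b d) = cornersCount C' + (if b < d then 1 else 0) := by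
  set S := C' ∪ vseg m b d with hS
  have hmemS : ∀ x, x ∈ S ↔ x ∈ C' ∨ (x.1 = m ∧ b ≤ x.2 ∧ x.2 ≤ d) := by
    intro x; rw [hS, Finset.mem_union, vseg_mem]
  rw [cornersCount, Finset.filter_union]
  rw [Finset.card_union_of_disjoint]
  · congr 1
    · -- corners within C' are the same
      rw [cornersCount]
      refine congrArg Finset.card ?_
      apply Finset.filter_congr
      intro x hx
      have hx1 : x.1 < m := hlt x hx
      have e1 : ((x.1 - 1, x.2) ∈ S) ↔ ((x.1 - 1, x.2) ∈ C') := by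
        rw [hmemS]
        constructor
        · rintro (hh | hh)
          · exact hh
          · exfalso; simp only at hh; omega
        · exact Or.inl
      have e2 : ((x.1, x.2 - 1) ∈ S) ↔ ((x.1, x.2 - 1) ∈ C') := by
        rw [hmemS]
        constructor
        · rintro (hh | hh)
          · exact hh
          · exfalso; simp only at hh; omega
        · exact Or.inl
      rw [e1, e2]
    · -- corners within the vertical segment
      have : (vseg m b d).filter (fun p => (p.1 - 1, p.2) ∈ S ∧ (p.1, p.2 - 1) ∈ S)
          = if b < d then {(m, d)} else ∅ := by
        ext x
        rw [Finset.mem_filter, vseg_mem]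
        constructor
        · rintro ⟨⟨hx1, hx2, hx3⟩, hc1, hc2⟩
          rw [hmemS] at hc1 hc2
          have hxd : x.2 = d := by
            rcases hc1 with hh | hh
            · have := hge _ hh; simp only at this; omega
            · simp only at hh; omega
          have hbx : b < x.2 := by
            rcases hc2 with hh | hh
            · have := hlt _ hh; simp only at this; omega
            · simp only at hh; omega
          have hbd' : b < d := hxd ▸ hbx
          rw [if_pos hbd', Finset.mem_singleton]
          exact Prod.ext hx1 hxd
        · intro hx
          split_ifs at hx with hbd'
          · rw [Finset.mem_singleton] at hx
            subst hx
            refine ⟨⟨rfl, hbd, le_rfl⟩, ?_, ?_⟩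
            · rw [hmemS]; exact Or.inl hQ'
            · rw [hmemS]; right
              exact (by omega : m = m ∧ b ≤ d - 1 ∧ d - 1 ≤ d)
          · exact absurd hx (Finset.notMem_empty x)
      rw [this]
      split_ifs <;> simp
  · -- disjointness of the two filtered parts
    apply Finset.disjoint_filter_filter
    rw [Finset.disjoint_left]
    intro x hx hx'
    have := hlt x hx
    rw [vseg_mem] at hx'
    omega

/-- top height of the part of `C` in column `m` -/
def mdv (m : ℕ) (C : Finset (ℕ × ℕ)) : ℕ := (C.filter (fun x => x.1 = m)).sup Prod.snd

lemma bwd {m n : ℕ} {h : ℕ → ℕ} (hanti : Antitone h) (h1 : h 1 = n) {p q b : ℕ}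
    (hp1 : 1 ≤ p) (hpm : p < m) (hb1 : 1 ≤ b)
    {C : Finset (ℕ × ℕ)} (hC : IsPath (ladder m n h) (p,q) (m,b) C) :
    b ≤ mdv m C ∧ mdv m C ≤ h m ∧
    IsPath (ladder m n h) (p,q) (m-1, mdv m C) (C.filter (fun x => x.1 ≠ m)) ∧
    C = (C.filter (fun x => x.1 ≠ m)) ∪ vseg m b (mdv m C) := by
  obtain ⟨hsub, hP, hQ, hbdd, hchain, hmax⟩ := hC
  set d := mdv m C with hd
  have hbdd' : ∀ x ∈ C, x.1 ≤ m ∧ b ≤ x.2 ∧ p ≤ x.1 ∧ x.2 ≤ q := by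
    intro x hx
    have := hbdd x hx
    exact ⟨this.1.1, this.1.2, this.2.1, this.2.2⟩
  have hQF : (m, b) ∈ C.filter (fun x => x.1 = m) := Finset.mem_filter.2 ⟨hQ, rfl⟩
  have hble : b ≤ d := Finset.le_sup (f := Prod.snd) hQF
  have hmd : (m, d) ∈ C := by
    obtain ⟨x0, hx0, hd0⟩ := Finset.exists_mem_eq_sup _ ⟨(m,b), hQF⟩ (Prod.snd)
    rw [Finset.mem_filter] at hx0
    have : x0 = (m, d) := Prod.ext hx0.2 hd0.symm
    exact this ▸ hx0.1
  have hsup : ∀ x ∈ C, x.1 = m → x.2 ≤ d :=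
    fun x hx hxm => Finset.le_sup (f := Prod.snd) (Finset.mem_filter.2 ⟨hx, hxm⟩)
  have hmdY := hsub hmd
  rw [ladder_mem] at hmdY
  have hdm : d ≤ h m := hmdY.2.2.2.2
  have hdn : d ≤ n := hmdY.2.2.2.1
  have hdq : d ≤ q := (hbdd _ hmd).2.2
  have hgel : ∀ x ∈ C, x.1 < m → d ≤ x.2 := by
    intro x hx hxm
    rcases hchain _ hmd _ hx with ⟨ha, hb'⟩ | ⟨ha, hb'⟩
    · exact hb'
    · simp only at ha; omega
  have hQ'' : (m - 1, d) ∈ C := by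
    apply hmax
    · rw [ladder_mem]
      have : h m ≤ h (m-1) := hanti (by omega)
      refine ⟨by omega, by omega, by omega, ?_, ?_⟩ <;> simp only <;> omega
    · exact ⟨by simp only; omega, by simp only; omega⟩
    · exact ⟨by simp only; omega, by simp only; omega⟩
    · intro x hx
      by_cases hxm : x.1 = m
      · left; exact ⟨by simp only; omega, by simpa only using hsup x hx hxm⟩
      · right
        have h1' := (hbdd' x hx).1
        exact ⟨by simp only; omega, by simpa only using hgel x hx (by omega)⟩
  refine ⟨hble, hdm, ⟨?_, ?_, ?_, ?_, ?_, ?_⟩, ?_⟩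
  · exact fun x hx => hsub (Finset.mem_filter.1 hx).1
  · exact Finset.mem_filter.2 ⟨hP, by simp only; omega⟩
  · exact Finset.mem_filter.2 ⟨hQ'', by simp only; omega⟩
  · intro x hx
    rw [Finset.mem_filter] at hx
    have h1' := hbdd' x hx.1
    have h2' := hgel x hx.1 (by omega)
    exact ⟨⟨by omega, h2'⟩, by omega, by omega⟩
  · intro x hx y hy
    exact hchain x (Finset.mem_filter.1 hx).1 y (Finset.mem_filter.1 hy).1
  · -- maximality of the truncated path
    intro z hz hQz hzP hcomp
    have hz1 : z.1 ≤ m - 1 := hQz.1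
    have hz2 : d ≤ z.2 := hQz.2
    have hzC : z ∈ C := by
      apply hmax z hz ⟨by omega, by omega⟩ hzP
      intro x hx
      by_cases hxm : x.1 = m
      · left
        exact ⟨by omega, by have := hsup x hx hxm; omega⟩
      · exact hcomp x (Finset.mem_filter.2 ⟨hx, hxm⟩)
    exact Finset.mem_filter.2 ⟨hzC, by omega⟩
  · -- decomposition of C
    ext x
    rw [Finset.mem_union, Finset.mem_filter, vseg_mem]
    constructor
    · intro hx
      by_cases hxm : x.1 = m
      · exact Or.inr ⟨hxm, (hbdd' x hx).2.1, hsup x hx hxm⟩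
      · exact Or.inl ⟨hx, hxm⟩
    · rintro (⟨hx, -⟩ | ⟨hx1, hx2, hx3⟩)
      · exact hx
      · have : (m, x.2) ∈ C := by
          apply hmax
          · rw [ladder_mem]
            refine ⟨by omega, by omega, by omega, ?_, ?_⟩ <;> simp only <;> omega
          · exact ⟨by simp only; omega, by simp only; omega⟩
          · exact ⟨by simp only; omega, by simp only; omega⟩
          · intro y hy
            by_cases hym : y.1 = m
            · rcases le_total y.2 x.2 with hle | hle
              · left; exact ⟨by simp only; omega, by simpa only using hle⟩
              · right; exact ⟨by simp only; omega, by simpa only using hle⟩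
            · right
              have h1' := (hbdd' y hy).1
              have h2' := hgel y hy (by omega)
              exact ⟨by simp only; omega, by simp only; omega⟩
        have hxx : x = (m, x.2) := Prod.ext hx1 rfl
        rw [hxx]; exact this

lemma mdv_union {m b d : ℕ} (hbd : b ≤ d) {C' : Finset (ℕ × ℕ)}
    (hlt : ∀ x ∈ C', x.1 < m) : mdv m (C' ∪ vseg m b d) = d := by
  rw [mdv]
  have hf : (C' ∪ vseg m b d).filter (fun x => x.1 = m) = vseg m b d := by
    ext x
    rw [Finset.mem_filter, Finset.mem_union]
    constructor
    · rintro ⟨hx | hx, hm⟩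
      · exact absurd hm (by have := hlt x hx; omega)
      · exact hx
    · intro hx
      exact ⟨Or.inr hx, (vseg_mem.1 hx).1⟩
  rw [hf, vseg, Finset.sup_image]
  apply le_antisymm
  · exact Finset.sup_le fun j hj => (Finset.mem_Icc.1 hj).2
  · exact Finset.le_sup (f := Prod.snd ∘ fun j => (m, j)) (Finset.mem_Icc.2 ⟨hbd, le_rfl⟩)

lemma union_inj {m b d : ℕ} {C₁ C₂ : Finset (ℕ × ℕ)} (h₁ : ∀ x ∈ C₁, x.1 < m)
    (h₂ : ∀ x ∈ C₂, x.1 < m) (he : C₁ ∪ vseg m b d = C₂ ∪ vseg m b d) : C₁ = C₂ := by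
  ext x
  constructor <;> intro hx
  · have hx2 : x ∈ C₂ ∪ vseg m b d := he ▸ Finset.mem_union_left _ hx
    rcases Finset.mem_union.1 hx2 with hh | hh
    · exact hh
    · rw [vseg_mem] at hh; have := h₁ x hx; omega
  · have hx2 : x ∈ C₁ ∪ vseg m b d := he.symm ▸ Finset.mem_union_left _ hx
    rcases Finset.mem_union.1 hx2 with hh | hh
    · exact hh
    · rw [vseg_mem] at hh; have := h₂ x hx; omega

lemma count_eq {m n : ℕ} {h : ℕ → ℕ} (hanti : Antitone h) (h1 : h 1 = n) {p q b : ℕ}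
    (hp1 : 1 ≤ p) (hpm : p < m) (hb1 : 1 ≤ b) (k : ℕ) :
    pathCount (ladder m n h) (p,q) (m,b) k =
      ∑ d ∈ Finset.Icc b (h m),
        Set.ncard {C' : Finset (ℕ × ℕ) | IsPath (ladder m n h) (p,q) (m-1,d) C' ∧
          cornersCount C' + (if b < d then 1 else 0) = k} := by
  have hfin := finite_paths (m := m) (n := n) (h := h) (P := (p,q)) (Q := (m,b))
    (fun C => cornersCount C = k)
  rw [pathCount, Set.ncard_eq_toFinset_card _ hfin]
  rw [Finset.card_eq_sum_card_fiberwise (f := mdv m) (t := Finset.Icc b (h m)) ?_]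
  · refine Finset.sum_congr rfl fun d hd => ?_
    rw [Finset.mem_Icc] at hd
    obtain ⟨hbd, hdm⟩ := hd
    set B := {C' : Finset (ℕ × ℕ) | IsPath (ladder m n h) (p,q) (m-1,d) C' ∧
      cornersCount C' + (if b < d then 1 else 0) = k} with hB
    have hm1 : (1:ℕ) ≤ m := by omega
    have himg : ((hfin.toFinset.filter (fun C => mdv m C = d)) : Set (Finset (ℕ × ℕ)))
        = (fun C' => C' ∪ vseg m b d) '' B := by
      ext C
      simp only [Finset.coe_filter, Set.mem_setOf_eq, Set.Finite.mem_toFinset, Set.mem_image,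
        hB]
      constructor
      · rintro ⟨⟨hpath, hcorn⟩, hmdv⟩
        obtain ⟨h1', h2', h3', h4'⟩ := bwd hanti h1 hp1 hpm hb1 hpath
        rw [hmdv] at h3' h4'
        have hlt : ∀ x ∈ C.filter (fun x => x.1 ≠ m), x.1 < m := by
          intro x hx
          have := (h3'.2.2.2.1 x hx).1.1
          omega
        have hge : ∀ x ∈ C.filter (fun x => x.1 ≠ m), d ≤ x.2 :=
          fun x hx => (h3'.2.2.2.1 x hx).1.2
        refine ⟨C.filter (fun x => x.1 ≠ m), ⟨h3', ?_⟩, h4'.symm⟩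
        rw [h4', corners_union hm1 hb1 hbd h3'.2.2.1 hlt hge] at hcorn
        exact hcorn
      · rintro ⟨C', ⟨hpath', hcorn'⟩, rfl⟩
        have hlt : ∀ x ∈ C', x.1 < m := by
          intro x hx
          have := (hpath'.2.2.2.1 x hx).1.1
          omega
        have hge : ∀ x ∈ C', d ≤ x.2 := fun x hx => (hpath'.2.2.2.1 x hx).1.2
        refine ⟨⟨fwd hanti h1 hp1 hpm hb1 hbd hdm hpath', ?_⟩, mdv_union hbd hlt⟩
        rw [corners_union hm1 hb1 hbd hpath'.2.2.1 hlt hge, hcorn']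
    have := congrArg Set.ncard himg
    rw [Set.ncard_coe_finset] at this
    rw [this, Set.ncard_image_of_injOn]
    intro C₁ hC₁ C₂ hC₂ he
    have hlt₁ : ∀ x ∈ C₁, x.1 < m := by
      intro x hx
      have := (hC₁.1.2.2.2.1 x hx).1.1
      omega
    have hlt₂ : ∀ x ∈ C₂, x.1 < m := by
      intro x hx
      have := (hC₂.1.2.2.2.1 x hx).1.1
      omega
    exact union_inj hlt₁ hlt₂ he
  · intro C hC
    rw [Finset.mem_coe, Set.Finite.mem_toFinset] at hC
    obtain ⟨h1', h2', -, -⟩ := bwd hanti h1 hp1 hpm hb1 hC.1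
    exact Finset.mem_Icc.2 ⟨h1', h2'⟩

lemma pathCount_eq_zero {m n : ℕ} {h : ℕ → ℕ} {P Q : ℕ × ℕ} {k : ℕ} (hk : n < k) :
    pathCount (ladder m n h) P Q k = 0 := by
  rw [pathCount]
  have : {C : Finset (ℕ × ℕ) | IsPath (ladder m n h) P Q C ∧ cornersCount C = k} = ∅ := by
    ext C
    simp only [Set.mem_setOf_eq, Set.mem_empty_iff_false, iff_false, not_and]
    intro hp hc
    have := corners_le hp
    omega
  rw [this, Set.ncard_empty]

lemma Wrec {m n : ℕ} {h : ℕ → ℕ} (hanti : Antitone h) (h1 : h 1 = n) {p q b : ℕ}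
    (hp1 : 1 ≤ p) (hpm : p < m) (hb1 : 1 ≤ b) :
    Wpoly (ladder m n h) (p,q) (m,b) (m+n+1) =
      ∑ d ∈ Finset.Icc 1 (h m), brk d b * Wpoly (ladder m n h) (p,q) (m-1,d) (m+n+1) := by
  have hcalc : Wpoly (ladder m n h) (p,q) (m,b) (m+n+1) =
      ∑ d ∈ Finset.Icc b (h m), brk d b * Wpoly (ladder m n h) (p,q) (m-1,d) (m+n+1) := by
    rw [Wpoly]
    calc ∑ k ∈ Finset.range (m+n+1),
          (pathCount (ladder m n h) (p,q) (m,b) k : Polynomial ℚ) * X ^ k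
        = ∑ k ∈ Finset.range (m+n+1), ∑ d ∈ Finset.Icc b (h m),
            (Set.ncard {C' : Finset (ℕ × ℕ) | IsPath (ladder m n h) (p,q) (m-1,d) C' ∧
              cornersCount C' + (if b < d then 1 else 0) = k} : Polynomial ℚ) * X ^ k := by
          refine Finset.sum_congr rfl fun k _ => ?_
          rw [count_eq hanti h1 hp1 hpm hb1 k]
          push_cast
          rw [Finset.sum_mul]
      _ = ∑ d ∈ Finset.Icc b (h m), ∑ k ∈ Finset.range (m+n+1),
            (Set.ncard {C' : Finset (ℕ × ℕ) | IsPath (ladder m n h) (p,q) (m-1,d) C' ∧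
              cornersCount C' + (if b < d then 1 else 0) = k} : Polynomial ℚ) * X ^ k :=
          Finset.sum_comm
      _ = ∑ d ∈ Finset.Icc b (h m), brk d b *
            Wpoly (ladder m n h) (p,q) (m-1,d) (m+n+1) := by
          refine Finset.sum_congr rfl fun d hd => ?_
          rw [Finset.mem_Icc] at hd
          rcases eq_or_lt_of_le hd.1 with he | hbd
          · -- d = b : no extra corner
            subst he
            have hnot : ¬ (b < b) := lt_irrefl b
            simp only [if_neg hnot, add_zero]
            rw [brk, if_neg hnot, if_pos rfl, one_mul, Wpoly]
            refine Finset.sum_congr rfl fun k _ => ?_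
            rw [pathCount]
          · -- b < d : one extra corner
            rw [brk, if_pos hbd]
            simp only [if_pos hbd]
            have h0 : {C' : Finset (ℕ × ℕ) | IsPath (ladder m n h) (p,q) (m-1,d) C' ∧
                cornersCount C' + 1 = 0} = ∅ := by
              ext C; simp
            have hsucc : ∀ k : ℕ, {C' : Finset (ℕ × ℕ) |
                  IsPath (ladder m n h) (p,q) (m-1,d) C' ∧ cornersCount C' + 1 = k + 1}
                = {C' : Finset (ℕ × ℕ) | IsPath (ladder m n h) (p,q) (m-1,d) C' ∧
                  cornersCount C' = k} := by
              intro k; ext C; simp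
            rw [Finset.sum_range_succ' _ (m+n)]
            simp only [hsucc, h0, Set.ncard_empty, Nat.cast_zero, zero_mul, add_zero]
            rw [Wpoly, Finset.sum_range_succ]
            have hz : pathCount (ladder m n h) (p,q) (m-1,d) (m+n) = 0 :=
              pathCount_eq_zero (by omega)
            rw [hz]
            push_cast
            rw [zero_mul, add_zero, Finset.mul_sum]
            refine Finset.sum_congr rfl fun k _ => ?_
            rw [pathCount]
            ring
  rw [hcalc]
  apply Finset.sum_subset
  · intro d hd
    rw [Finset.mem_Icc] at hd ⊢
    omega
  · intro d hd hnd
    rw [Finset.mem_Icc] at hd hnd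
    have : d < b := by omega
    rw [brk, if_neg (by omega), if_neg (by omega), zero_mul]

lemma det_expand {r H : ℕ} (b : Fin r → ℕ) (M : Fin r → ℕ → Polynomial ℚ) :
    Matrix.det (Matrix.of fun i j : Fin r => ∑ d ∈ Finset.Icc 1 H, brk d (b j) * M i d) =
    ∑ d ∈ (Finset.Icc (fun _ => 1) (fun _ => H)).filter
        (fun d : Fin r → ℕ => ∀ i j, i < j → d i < d j),
      braceT d b * Matrix.det (Matrix.of fun i j : Fin r => M i (d j)) := by
  -- Step 1: expand multilinearly
  have step1 : Matrix.det (Matrix.of fun i j : Fin r =>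
      ∑ d ∈ Finset.Icc 1 H, brk d (b j) * M i d) =
      ∑ D ∈ Fintype.piFinset (fun _ : Fin r => Finset.Icc 1 H),
        (∏ j, brk (D j) (b j)) * Matrix.det (Matrix.of fun i j : Fin r => M i (D j)) := by
    rw [Matrix.det_apply]
    simp only [Matrix.det_apply, Finset.mul_sum, Finset.sum_mul]
    rw [Finset.sum_comm]
    apply Finset.sum_congr rfl
    intro σ _
    have : ∀ j : Fin r, (Matrix.of fun i j : Fin r =>
        ∑ d ∈ Finset.Icc 1 H, brk d (b j) * M i d) (σ j) j
        = ∑ d ∈ Finset.Icc 1 H, brk d (b j) * M (σ j) d := fun j => rfl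
    simp only [Matrix.of_apply] at this ⊢
    simp only [this, Finset.prod_univ_sum]
    rw [Finset.smul_sum]
    apply Finset.sum_congr rfl
    intro D _
    rw [Finset.prod_mul_distrib, mul_smul_comm]
  rw [step1]
  rw [← Finset.sum_filter_add_sum_filter_not _ (fun D => Function.Injective D)]
  have zero2 : ∑ D ∈ (Fintype.piFinset (fun _ : Fin r => Finset.Icc 1 H)).filter
      (fun D => ¬ Function.Injective D),
      (∏ j, brk (D j) (b j)) * Matrix.det (Matrix.of fun i j : Fin r => M i (D j)) = 0 := by
    apply Finset.sum_eq_zero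
    intro D hD
    rw [Finset.mem_filter] at hD
    obtain ⟨i, j, hij, hne⟩ : ∃ i j, D i = D j ∧ i ≠ j := by
      by_contra hc
      push_neg at hc
      exact hD.2 (fun a b hab => hc a b hab)
    rw [Matrix.det_zero_of_column_eq hne (fun k => by simp [hij]), mul_zero]
  rw [zero2, add_zero]
  have rhs : ∑ d ∈ (Finset.Icc (fun _ => 1) (fun _ => H)).filter
        (fun d : Fin r → ℕ => ∀ i j, i < j → d i < d j),
      braceT d b * Matrix.det (Matrix.of fun i j : Fin r => M i (d j)) =
      ∑ p ∈ ((Finset.Icc (fun _ => 1) (fun _ => H)).filter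
        (fun d : Fin r → ℕ => ∀ i j, i < j → d i < d j)) ×ˢ
          (Finset.univ : Finset (Equiv.Perm (Fin r))),
        (Equiv.Perm.sign p.2 : ℤ) • ((∏ i, brk (p.1 (p.2 i)) (b i)) *
          Matrix.det (Matrix.of fun i j : Fin r => M i (p.1 j))) := by
    rw [Finset.sum_product]
    refine Finset.sum_congr rfl fun e _ => ?_
    rw [braceT, Finset.sum_mul]
    refine Finset.sum_congr rfl fun σ _ => ?_
    rw [smul_mul_assoc]
  rw [rhs]
  refine (Finset.sum_bij (fun p _ => p.1 ∘ p.2) ?_ ?_ ?_ ?_).symm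
  · rintro ⟨e, σ⟩ hp
    simp only [Finset.mem_product, Finset.mem_filter, Finset.mem_Icc] at hp
    obtain ⟨⟨he1, he2⟩, -⟩ := hp
    have hsm : StrictMono e := fun i j hij => he2 i j hij
    simp only [Finset.mem_filter, Fintype.mem_piFinset, Finset.mem_Icc]
    constructor
    · intro j
      have h1 := he1.1 (σ j)
      have h2 := he1.2 (σ j)
      exact ⟨h1, h2⟩
    · exact hsm.injective.comp σ.injective
  · rintro ⟨e, σ⟩ hp ⟨e', σ'⟩ hp' heq0
    have heq : e ∘ ⇑σ = e' ∘ ⇑σ' := heq0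
    simp only [Finset.mem_product, Finset.mem_filter, Finset.mem_Icc] at hp hp'
    have hsm : StrictMono e := fun i j hij => hp.1.2 i j hij
    have hsm' : StrictMono e' := fun i j hij => hp'.1.2 i j hij
    have hinj : Function.Injective (e ∘ σ) := hsm.injective.comp σ.injective
    set s0 : Finset ℕ := Finset.image (e ∘ ⇑σ) Finset.univ with hs0
    have hcard : s0.card = r := by
      rw [hs0, Finset.card_image_of_injective _ hinj, Finset.card_univ, Fintype.card_fin]
    have hee : e = e' := by
      have h1 : e = ⇑(s0.orderEmbOfFin hcard) := by
        apply Finset.orderEmbOfFin_unique hcard _ hsm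
        intro x
        rw [hs0]
        exact Finset.mem_image.2 ⟨σ.symm x, Finset.mem_univ _, by simp⟩
      have h2 : e' = ⇑(s0.orderEmbOfFin hcard) := by
        apply Finset.orderEmbOfFin_unique hcard _ hsm'
        intro x
        rw [hs0, heq]
        exact Finset.mem_image.2 ⟨σ'.symm x, Finset.mem_univ _, by simp⟩
      rw [h1, h2]
    subst hee
    have hσ : σ = σ' := by
      ext j
      exact congrArg _ (hsm.injective (congrFun heq j))
    simp [hσ]
  · intro D hD
    simp only [Finset.mem_filter, Fintype.mem_piFinset, Finset.mem_Icc] at hD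
    obtain ⟨hmem, hinj⟩ := hD
    set s0 : Finset ℕ := Finset.image D Finset.univ with hs0
    have hcard : s0.card = r := by
      rw [hs0, Finset.card_image_of_injective _ hinj, Finset.card_univ, Fintype.card_fin]
    have hDmem : ∀ j, D j ∈ s0 := fun j => Finset.mem_image.2 ⟨j, Finset.mem_univ _, rfl⟩
    have τinj : Function.Injective
        (fun j => (s0.orderIsoOfFin hcard).symm ⟨D j, hDmem j⟩) := by
      intro a c hac
      apply hinj
      have := congrArg (fun x => ((s0.orderIsoOfFin hcard) x : ℕ)) hac
      simpa using this
    have τbij : Function.Bijective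
        (fun j => (s0.orderIsoOfFin hcard).symm ⟨D j, hDmem j⟩) :=
      Finite.injective_iff_bijective.mp τinj
    refine ⟨⟨fun j => s0.orderEmbOfFin hcard j, Equiv.ofBijective _ τbij⟩, ?_, ?_⟩
    · simp only [Finset.mem_product, Finset.mem_filter, Finset.mem_Icc, Finset.mem_univ,
        and_true]
      refine ⟨⟨fun j => ?_, fun j => ?_⟩, fun i j hij => (s0.orderEmbOfFin hcard).strictMono hij⟩
      · obtain ⟨x, -, hx⟩ := Finset.mem_image.1 (Finset.orderEmbOfFin_mem s0 hcard j)
        show (1:ℕ) ≤ s0.orderEmbOfFin hcard j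
        rw [← hx]; exact (hmem x).1
      · obtain ⟨x, -, hx⟩ := Finset.mem_image.1 (Finset.orderEmbOfFin_mem s0 hcard j)
        show s0.orderEmbOfFin hcard j ≤ H
        rw [← hx]; exact (hmem x).2
    · funext j
      show s0.orderEmbOfFin hcard (Equiv.ofBijective _ τbij j) = D j
      rw [Equiv.ofBijective_apply, ← Finset.coe_orderIsoOfFin_apply]
      simp
  · rintro ⟨e, σ⟩ hp
    simp only
    have hdet : Matrix.det (Matrix.of fun i j : Fin r => M i ((e ∘ σ) j)) =
        (Equiv.Perm.sign σ : ℤ) • Matrix.det (Matrix.of fun i j : Fin r => M i (e j)) := by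
      have := Matrix.det_permute' σ (Matrix.of fun i j : Fin r => M i (e j))
      have hsub : (Matrix.of fun i j : Fin r => M i (e j)).submatrix id σ =
          Matrix.of fun i j : Fin r => M i ((e ∘ σ) j) := rfl
      rw [hsub] at this
      rw [this]
      simp [zsmul_eq_mul]
    rw [hdet, mul_smul_comm]
    rfl

/-- Lemma 2.2(i) (determinant transfer identity, peeling off column `m`):
`W̃(n,m; b₁,…,b_r) = ∑_{d ∈ S_r, (m,d_r) ∈ Y} {d;b} · W̃(n,m-1; d₁,…,d_r)`, where
`W̃(n,m'; c₁,…,c_r) = det[W(Pᵢ, (m', c_j))]` with `Pᵢ = (i,n)` and `W` the single-path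
corner-counting polynomial in the ladder `Y`, and the sum is over strictly increasing
`r`-tuples `d` with `1 ≤ d₁ < ⋯ < d_r ≤ h m` (i.e. `(m, d_r) ∈ Y`). -/
theorem transfer_det (m n r : ℕ) (h : ℕ → ℕ) (hanti : Antitone h) (h1 : h 1 = n)
    (hr : 1 ≤ r) (hrm : r < m)
    (b : Fin r → ℕ) (hb : StrictMono b) (hb1 : ∀ i, 1 ≤ b i)
    (hP : n ≤ h r) (hQ : ∀ i, b i ≤ h m) :
    Matrix.det (Matrix.of fun i j : Fin r =>
        Wpoly (ladder m n h) ((i : ℕ) + 1, n) (m, b j) (m + n + 1)) =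
      ∑ d ∈ (Finset.Icc (fun _ => 1) (fun _ => h m)).filter
          (fun d : Fin r → ℕ => ∀ i j, i < j → d i < d j),
        braceT d b *
          Matrix.det (Matrix.of fun i j : Fin r =>
            Wpoly (ladder m n h) ((i : ℕ) + 1, n) (m - 1, d j) (m + n + 1)) := by
  have key : (Matrix.of fun i j : Fin r =>
      Wpoly (ladder m n h) ((i : ℕ) + 1, n) (m, b j) (m + n + 1))
      = Matrix.of fun i j : Fin r => ∑ d ∈ Finset.Icc 1 (h m),
          brk d (b j) * (fun (i : Fin r) (d : ℕ) =>
            Wpoly (ladder m n h) ((i : ℕ) + 1, n) (m - 1, d) (m + n + 1)) i d := by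
    refine Matrix.ext fun i j => ?_
    simp only [Matrix.of_apply]
    exact Wrec (m := m) (n := n) (h := h) (p := (i : ℕ) + 1) (q := n) (b := b j) hanti h1 (by omega)
      (by have := i.isLt; omega) (hb1 j)
  rw [key, det_expand]
end
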